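/- arXiv:1707.05212 — 7 statements merged into one kernel-verified Lean document; each statement's English description precedes it below -/
import Mathlib

section
/- Fefferman–Stein inequality for the dyadic maximal operator: for every weight w and every f ∈ L¹(ℳw), one has ‖ℳf‖_{L^{1,∞}(w)} ≤ ‖f‖_{L¹(ℳw)}, i.e., for all λ > 0, w({ℳf > λ}) ≤ λ^{-1} ∫ |f| ℳw dμ. -/
open MeasureTheory
open scoped ENNReal

/-
The level set `{ℳf > λ}` is covered by the dyadic cubes `Q` with `⟨f⟩_Q > λ`. On such a cube
`λ w(Q) ≤ ⟨f⟩_Q w(Q) = ∫_Q f ⟨w⟩_Q ≤ ∫_Q f ℳw`. By continuity of `w dμ` from below it suffices to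
cover finitely many cubes at a time, and a finite nested family is the disjoint union of its
maximal members, so the cube-wise estimates add up.
-/

section

variable {α : Type*}

theorem Finset.exists_pairwiseDisjoint_biUnion_eq_of_nested (F : Finset (Set α))
    (hnest : ∀ Q ∈ F, ∀ Q' ∈ F, Disjoint Q Q' ∨ Q ⊆ Q' ∨ Q' ⊆ Q) :
    ∃ G ⊆ F, (G : Set (Set α)).PairwiseDisjoint id ∧ ⋃ Q ∈ G, Q = ⋃ Q ∈ F, Q := by
  classical
  refine ⟨F.filter (Maximal (· ∈ F)), F.filter_subset _, ?_, ?_⟩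
  · intro Q hQ Q' hQ' hne
    simp only [Finset.coe_filter, Set.mem_ofPred_eq] at hQ hQ'
    rcases hnest Q hQ.1 Q' hQ'.1 with hdisj | hsub | hsub
    · exact hdisj
    · exact absurd (hQ.2.eq_of_le hQ'.1 hsub) hne
    · exact absurd (hQ'.2.eq_of_le hQ.1 hsub).symm hne
  · refine subset_antisymm (Set.biUnion_subset_biUnion_left ?_) ?_
    · exact_mod_cast F.filter_subset _
    simp only [Set.iUnion_subset_iff]
    intro Q hQ x hx
    obtain ⟨Q', hQQ', hmax⟩ := F.exists_le_maximal hQ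
    exact Set.mem_biUnion (Finset.mem_filter.2 ⟨hmax.prop, hmax⟩) (hQQ' hx)

variable [MeasurableSpace α] {μ : Measure α}

theorem Set.Countable.measure_biUnion_eq_iSup_finset {S : Set (Set α)} (hS : S.Countable) :
    μ (⋃ Q ∈ S, Q) = ⨆ (F : Finset (Set α)) (_ : ↑F ⊆ S), μ (⋃ Q ∈ F, Q) := by
  have hcount : {F : Finset (Set α) | ↑F ⊆ S}.Countable :=
    ((Set.countable_ofPred_finite_subset hS).preimage Finset.coe_injective).mono
      fun F hF => by exact ⟨F.finite_toSet, hF⟩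
  have hdir : DirectedOn (Function.onFun (· ⊆ ·) fun F : Finset (Set α) => ⋃ Q ∈ F, Q)
      {F | ↑F ⊆ S} := by
    classical
    intro F hF F' hF'
    refine ⟨F ∪ F', ?_, ?_, ?_⟩
    · simpa only [Set.mem_ofPred_eq, Finset.coe_union, Set.union_subset_iff] using ⟨hF, hF'⟩
    all_goals exact Set.biUnion_subset_biUnion_left (by simp)
  have hunion : ⋃ Q ∈ S, Q = ⋃ F ∈ {F : Finset (Set α) | ↑F ⊆ S}, ⋃ Q ∈ F, Q := by
    ext x
    simp only [Set.mem_iUnion, Set.mem_ofPred_eq, exists_prop]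
    constructor
    · rintro ⟨Q, hQ, hx⟩
      exact ⟨{Q}, by simpa using hQ, Q, Finset.mem_singleton_self Q, hx⟩
    · rintro ⟨F, hF, Q, hQ, hx⟩
      exact ⟨Q, hF hQ, hx⟩
  rw [hunion, measure_biUnion_eq_iSup hcount hdir]
  simp only [Set.mem_ofPred_eq]

theorem mul_setLIntegral_le_of_le_average {Q : Set α} (hQ : MeasurableSet Q)
    {f w g : α → ℝ≥0∞} {c : ℝ≥0∞} (hc : c ≤ (μ Q)⁻¹ * ∫⁻ y in Q, f y ∂μ)
    (hg : ∀ x ∈ Q, (μ Q)⁻¹ * ∫⁻ y in Q, w y ∂μ ≤ g x) :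
    c * ∫⁻ y in Q, w y ∂μ ≤ ∫⁻ x in Q, f x * g x ∂μ :=
  calc c * ∫⁻ y in Q, w y ∂μ
      ≤ ((μ Q)⁻¹ * ∫⁻ y in Q, f y ∂μ) * ∫⁻ y in Q, w y ∂μ := by gcongr
    _ = (∫⁻ y in Q, f y ∂μ) * ((μ Q)⁻¹ * ∫⁻ y in Q, w y ∂μ) := by ring
    _ ≤ ∫⁻ x in Q, f x * ((μ Q)⁻¹ * ∫⁻ y in Q, w y ∂μ) ∂μ := lintegral_mul_const_le _ _
    _ ≤ ∫⁻ x in Q, f x * g x ∂μ := setLIntegral_mono' hQ fun x hx => by gcongr; exact hg x hx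

theorem mul_measure_biUnion_le_lintegral_of_nested {ν : Measure α} (F : Finset (Set α))
    (hnest : ∀ Q ∈ F, ∀ Q' ∈ F, Disjoint Q Q' ∨ Q ⊆ Q' ∨ Q' ⊆ Q)
    (hmeas : ∀ Q ∈ F, MeasurableSet Q) {c : ℝ≥0∞} {h : α → ℝ≥0∞}
    (hle : ∀ Q ∈ F, c * ν Q ≤ ∫⁻ x in Q, h x ∂μ) :
    c * ν (⋃ Q ∈ F, Q) ≤ ∫⁻ x, h x ∂μ := by
  obtain ⟨G, hGF, hdisj, hGU⟩ := F.exists_pairwiseDisjoint_biUnion_eq_of_nested hnest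
  rw [← hGU]
  calc c * ν (⋃ Q ∈ G, Q)
      ≤ c * ∑ Q ∈ G, ν Q := by gcongr; exact measure_biUnion_finset_le G id
    _ = ∑ Q ∈ G, c * ν Q := Finset.mul_sum _ _ _
    _ ≤ ∑ Q ∈ G, ∫⁻ x in Q, h x ∂μ := Finset.sum_le_sum fun Q hQ => hle Q (hGF hQ)
    _ = ∫⁻ x in ⋃ Q ∈ G, Q, h x ∂μ :=
      (lintegral_biUnion_finset hdisj (fun Q hQ => hmeas Q (hGF hQ)) h).symm
    _ ≤ ∫⁻ x, h x ∂μ := setLIntegral_le_lintegral _ _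

end

theorem stmt_8_general {α : Type*} [MeasurableSpace α] (μ : Measure α)
    (𝒟 : Set (Set α)) (hcount : 𝒟.Countable)
    (hmeas : ∀ Q ∈ 𝒟, MeasurableSet Q)
    (hnest : ∀ Q ∈ 𝒟, ∀ Q' ∈ 𝒟, Disjoint Q Q' ∨ Q ⊆ Q' ∨ Q' ⊆ Q)
    (M : (α → ℝ≥0∞) → α → ℝ≥0∞)
    (hM : M = fun g x => ⨆ Q ∈ 𝒟, ⨆ (_ : x ∈ Q), (μ Q)⁻¹ * ∫⁻ y in Q, g y ∂μ)
    (w f : α → ℝ≥0∞)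
    (lam : ℝ≥0∞) :
    lam * ∫⁻ x in {x | lam < M f x}, w x ∂μ ≤ ∫⁻ x, f x * M w x ∂μ := by
  set B := {Q ∈ 𝒟 | lam < (μ Q)⁻¹ * ∫⁻ y in Q, f y ∂μ}
  have hB𝒟 : B ⊆ 𝒟 := fun Q hQ => hQ.1
  have hlevel : {x | lam < M f x} ⊆ ⋃ Q ∈ B, Q := fun x hx => by
    simp only [hM, Set.mem_ofPred_eq, lt_iSup_iff] at hx
    obtain ⟨Q, hQ, hxQ, hlt⟩ := hx
    exact Set.mem_biUnion ⟨hQ, hlt⟩ hxQ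
  have hcube : ∀ Q ∈ B, lam * μ.withDensity w Q ≤ ∫⁻ x in Q, f x * M w x ∂μ := by
    rintro Q ⟨hQ, hlt⟩
    rw [withDensity_apply _ (hmeas Q hQ)]
    refine mul_setLIntegral_le_of_le_average (hmeas Q hQ) hlt.le fun x hx => ?_
    rw [hM]
    exact le_iSup₂_of_le Q hQ (le_iSup_of_le hx le_rfl)
  calc lam * ∫⁻ x in {x | lam < M f x}, w x ∂μ
      ≤ lam * μ.withDensity w (⋃ Q ∈ B, Q) := by
        gcongr
        exact (lintegral_mono_set hlevel).trans (withDensity_apply_le _ _)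
    _ = ⨆ (F : Finset (Set α)) (_ : ↑F ⊆ B), lam * μ.withDensity w (⋃ Q ∈ F, Q) := by
        simp only [(hcount.mono hB𝒟).measure_biUnion_eq_iSup_finset, ENNReal.mul_iSup]
    _ ≤ ∫⁻ x, f x * M w x ∂μ := iSup₂_le fun F hF =>
        mul_measure_biUnion_le_lintegral_of_nested F
          (fun Q hQ Q' hQ' => hnest Q (hB𝒟 (hF hQ)) Q' (hB𝒟 (hF hQ')))
          (fun Q hQ => hmeas Q (hB𝒟 (hF hQ))) fun Q hQ => hcube Q (hF hQ)

/-- Fefferman–Stein inequality for the dyadic maximal operator: for every weight `w`, every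
`f` and every `λ > 0`, `λ · w({ℳf > λ}) ≤ ∫ |f| ℳw dμ`, i.e.
`‖ℳf‖_{L^{1,∞}(w)} ≤ ‖f‖_{L¹(ℳw)}`. -/
theorem stmt_8 {α : Type*} [MeasurableSpace α] (μ : Measure α)
    (𝒟 : Set (Set α)) (hcount : 𝒟.Countable)
    (hmeas : ∀ Q ∈ 𝒟, MeasurableSet Q)
    (hfin : ∀ Q ∈ 𝒟, 0 < μ Q ∧ μ Q < ⊤)
    (hnest : ∀ Q ∈ 𝒟, ∀ Q' ∈ 𝒟, Disjoint Q Q' ∨ Q ⊆ Q' ∨ Q' ⊆ Q)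
    (M : (α → ℝ≥0∞) → α → ℝ≥0∞)
    (hM : M = fun g x => ⨆ Q ∈ 𝒟, ⨆ (_ : x ∈ Q), (μ Q)⁻¹ * ∫⁻ y in Q, g y ∂μ)
    (w f : α → ℝ≥0∞) (hw : Measurable w) (hf : Measurable f)
    (lam : ℝ≥0∞) (hlam : 0 < lam) :
    lam * ∫⁻ x in {x | lam < M f x}, w x ∂μ ≤ ∫⁻ x, f x * M w x ∂μ :=
  stmt_8_general μ 𝒟 hcount hmeas hnest M hM w f lam
end

section
/- For 1 ≤ q < p < ∞ and any weight w, ‖ℳ_q f‖_{L^p(w)} ≤ ((p/q)')^{1/q} ‖f‖_{L^p(ℳw)}, where ℳ_q f = (ℳ(|f|^q))^{1/q}. -/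
/-!
Fefferman–Stein: the set `{ℳh > s}` is the union of the sets `Q ∈ 𝒟` on which the average of `h`
exceeds `s`; on each of them `s · w(Q) ≤ (∫_Q h) · ⟨w⟩_Q ≤ ∫_Q h ℳw`, and nestedness lets one pass
to disjoint maximal members, so `s · w{ℳh > s} ≤ ∫ h ℳw`. Since `ℳg ≤ ℳ(g - t/R')₊ + t/R'` and
`t = t/R + t/R'`, this gives `w{ℳg > t} ≤ (R/t) ∫ (g - t/R')₊ ℳw`. Integrating against
`R t^(R-1) dt` (layer cake) and computing `∫₀^∞ R² t^(R-2) (b - t/R')₊ dt = R'^R b^R` yields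
`∫ (ℳg)^R w ≤ R'^R ∫ g^R ℳw` with the sharp constant; `g = f^q`, `R = p/q` and a `p`-th root give
the claim. Tonelli needs `μ` s-finite, which is harmless: `ℳg` vanishes off `⋃ 𝒟`, a countable
union of sets of finite measure.
-/

open MeasureTheory Set
open scoped ENNReal

lemma lintegral_Ioo_ofReal_eq_ofReal_integral {f : ℝ → ℝ} {c : ℝ} (hc : 0 ≤ c)
    (hf : IntervalIntegrable f volume 0 c) (hf_nn : ∀ t ∈ Ioo 0 c, 0 ≤ f t) :
    ∫⁻ t in Ioo 0 c, ENNReal.ofReal (f t) = ENNReal.ofReal (∫ t in 0..c, f t) := by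
  rw [intervalIntegral.integral_of_le hc, integral_Ioc_eq_integral_Ioo,
    ofReal_integral_eq_lintegral_ofReal (hf.1.mono_set Ioo_subset_Ioc_self)
      (ae_restrict_of_forall_mem measurableSet_Ioo hf_nn)]

lemma lintegral_Ioo_mul_rpow_sub_one {R A : ℝ} (hR : 0 < R) (hA : 0 ≤ A) :
    ∫⁻ t in Ioo 0 A, ENNReal.ofReal (R * t ^ (R - 1)) = ENNReal.ofReal (A ^ R) := by
  have hint : IntervalIntegrable (fun t : ℝ => R * t ^ (R - 1)) volume 0 A :=
    (intervalIntegral.intervalIntegrable_rpow' (by linarith)).const_mul R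
  rw [lintegral_Ioo_ofReal_eq_ofReal_integral hA hint
    fun t ht => mul_nonneg hR.le (Real.rpow_nonneg ht.1.le _), intervalIntegral.integral_const_mul,
    integral_rpow (Or.inl (by linarith)), sub_add_cancel, Real.zero_rpow hR.ne', sub_zero,
    mul_div_cancel₀ _ hR.ne']

lemma rpow_eq_lintegral_Ioi_indicator {R : ℝ} (hR : 0 < R) (a : ℝ≥0∞) :
    a ^ R = ∫⁻ t in Ioi 0,
      {t : ℝ | ENNReal.ofReal t < a}.indicator (fun t => ENNReal.ofReal (R * t ^ (R - 1))) t := by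
  rw [setLIntegral_indicator (measurableSet_lt ENNReal.measurable_ofReal measurable_const)]
  induction a with
  | top =>
    simp only [ENNReal.ofReal_lt_top, ofPred_true, univ_inter, ENNReal.top_rpow_of_pos hR]
    refine (ENNReal.eq_top_of_forall_nnreal_le fun r => ?_).symm
    calc (r : ℝ≥0∞) = ENNReal.ofReal (((r : ℝ) ^ R⁻¹) ^ R) := by
          rw [← Real.rpow_mul r.coe_nonneg, inv_mul_cancel₀ hR.ne', Real.rpow_one,
            ENNReal.ofReal_coe_nnreal]
      _ = ∫⁻ t in Ioo 0 ((r : ℝ) ^ R⁻¹), ENNReal.ofReal (R * t ^ (R - 1)) :=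
          (lintegral_Ioo_mul_rpow_sub_one hR (by positivity)).symm
      _ ≤ _ := lintegral_mono_set Ioo_subset_Ioi_self
  | coe A =>
    have hset : {t : ℝ | ENNReal.ofReal t < A} ∩ Ioi 0 = Ioo 0 (A : ℝ) := by
      ext t
      simp only [mem_inter_iff, mem_ofPred_eq, mem_Ioi, mem_Ioo, ← ENNReal.ofReal_coe_nnreal,
        ENNReal.ofReal_lt_ofReal_iff']
      constructor
      · rintro ⟨⟨h, -⟩, h0⟩; exact ⟨h0, h⟩
      · rintro ⟨h0, h⟩; exact ⟨⟨h, h0.trans h⟩, h0⟩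
    rw [hset, lintegral_Ioo_mul_rpow_sub_one hR A.coe_nonneg, ← ENNReal.ofReal_coe_nnreal,
      ENNReal.ofReal_rpow_of_nonneg A.coe_nonneg hR.le]

lemma integral_rpow_mul_sub {R c : ℝ} (hR : 1 < R) (hc : 0 ≤ c) :
    ∫ t in 0..c, R ^ 2 * t ^ (R - 2) * (c / R.conjExponent - t / R.conjExponent) = c ^ R := by
  have hR1 : R - 1 ≠ 0 := by linarith
  have hsimp : EqOn (fun t : ℝ => R ^ 2 * t ^ (R - 2) * (c / R.conjExponent - t / R.conjExponent))
      (fun t => R * (R - 1) * c * t ^ (R - 2) - R * (R - 1) * t ^ (R - 1)) (uIcc 0 c) := by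
    intro t ht
    have ht0 : 0 ≤ t := by rw [uIcc_of_le hc] at ht; exact ht.1
    have : t ^ (R - 1) = t ^ (R - 2) * t := by
      rw [← Real.rpow_add_one' ht0 (by linarith)]; ring_nf
    simp only [this, Real.conjExponent]
    field_simp
  have h1 : IntervalIntegrable (fun t : ℝ => t ^ (R - 2)) volume 0 c :=
    intervalIntegral.intervalIntegrable_rpow' (by linarith)
  have h2 : IntervalIntegrable (fun t : ℝ => t ^ (R - 1)) volume 0 c :=
    intervalIntegral.intervalIntegrable_rpow' (by linarith)
  rw [intervalIntegral.integral_congr hsimp, intervalIntegral.integral_sub (h1.const_mul _)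
    (h2.const_mul _), intervalIntegral.integral_const_mul, intervalIntegral.integral_const_mul,
    integral_rpow (Or.inl (by linarith)), integral_rpow (Or.inl (by linarith)),
    show R - 2 + 1 = R - 1 by ring, sub_add_cancel, Real.zero_rpow (by linarith),
    Real.zero_rpow (by linarith)]
  have hcR : c ^ (R - 1) * c = c ^ R := by
    rw [← Real.rpow_add_one' hc (by linarith), sub_add_cancel]
  field_simp
  linear_combination R * hcR

lemma lintegral_Ioi_rpow_mul_tsub {R : ℝ} (hR : 1 < R) (b : ℝ≥0∞) :
    ∫⁻ t in Ioi 0, ENNReal.ofReal (R ^ 2 * t ^ (R - 2)) * (b - ENNReal.ofReal (t / R.conjExponent))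
      = ENNReal.ofReal (R.conjExponent ^ R) * b ^ R := by
  have hR' : 0 < R.conjExponent := div_pos (by linarith) (by linarith)
  induction b with
  | top =>
    have hpos : EqOn (fun t : ℝ => ENNReal.ofReal (R ^ 2 * t ^ (R - 2)) *
        (∞ - ENNReal.ofReal (t / R.conjExponent))) (fun _ => ∞) (Ioi 0) := fun t ht => by
      dsimp only
      rw [ENNReal.top_sub ENNReal.ofReal_ne_top]
      have := Real.rpow_pos_of_pos ht (R - 2)
      exact ENNReal.mul_top (ENNReal.ofReal_pos.2 (by positivity)).ne'
    rw [setLIntegral_congr_fun measurableSet_Ioi hpos, setLIntegral_const, Real.volume_Ioi,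
      ENNReal.top_rpow_of_pos (by linarith), ENNReal.top_mul_top,
      ENNReal.mul_top (ENNReal.ofReal_pos.2 (Real.rpow_pos_of_pos hR' R)).ne']
  | coe B =>
    set c := R.conjExponent * B with hc_def
    have hc : 0 ≤ c := by positivity
    have hB : (B : ℝ) = c / R.conjExponent := by rw [hc_def, mul_div_cancel_left₀ _ hR'.ne']
    set G : ℝ → ℝ := fun t => R ^ 2 * t ^ (R - 2) * (c / R.conjExponent - t / R.conjExponent)
    have hpt : EqOn (fun t : ℝ => ENNReal.ofReal (R ^ 2 * t ^ (R - 2)) *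
        ((B : ℝ≥0∞) - ENNReal.ofReal (t / R.conjExponent)))
        ((Ioo 0 c).indicator fun t => ENNReal.ofReal (G t)) (Ioi 0) := by
      intro t (ht : 0 < t)
      dsimp only
      rw [← ENNReal.ofReal_coe_nnreal, ← ENNReal.ofReal_sub _ (div_nonneg ht.le hR'.le),
        ← ENNReal.ofReal_mul (by positivity), hB]
      by_cases htc : t < c
      · rw [indicator_of_mem (show t ∈ Ioo 0 c from ⟨ht, htc⟩)]
      · rw [indicator_of_notMem fun h => htc h.2, ENNReal.ofReal_eq_zero]
        have : c / R.conjExponent ≤ t / R.conjExponent := by gcongr; exact not_lt.1 htc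
        exact mul_nonpos_of_nonneg_of_nonpos (by positivity) (by linarith)
    have hGint : IntervalIntegrable G volume 0 c :=
      ((intervalIntegral.intervalIntegrable_rpow' (by linarith)).const_mul _).mul_continuousOn
        (by fun_prop)
    have hGnn : ∀ t ∈ Ioo 0 c, 0 ≤ G t := fun t ht => by
      have : t / R.conjExponent ≤ c / R.conjExponent := by gcongr; exact ht.2.le
      have := ht.1
      exact mul_nonneg (by positivity) (by linarith)
    rw [setLIntegral_congr_fun measurableSet_Ioi hpt, setLIntegral_indicator measurableSet_Ioo,
      inter_eq_left.2 Ioo_subset_Ioi_self, lintegral_Ioo_ofReal_eq_ofReal_integral hc hGint hGnn,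
      integral_rpow_mul_sub hR hc, ← ENNReal.ofReal_coe_nnreal,
      ENNReal.ofReal_rpow_of_nonneg B.coe_nonneg (by linarith),
      ← ENNReal.ofReal_mul (by positivity), Real.mul_rpow hR'.le B.coe_nonneg]

section

variable {α : Type*} [MeasurableSpace α]

lemma lintegral_rpow_eq_lintegral_meas_ofReal_lt_mul {ν : Measure α} [SFinite ν]
    {f : α → ℝ≥0∞} (hf : Measurable f) {R : ℝ} (hR : 0 < R) :
    ∫⁻ x, f x ^ R ∂ν =
      ∫⁻ t in Ioi 0, ENNReal.ofReal (R * t ^ (R - 1)) * ν {x | ENNReal.ofReal t < f x} := by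
  have hmeas : Measurable (Function.uncurry fun x t =>
      {t : ℝ | ENNReal.ofReal t < f x}.indicator (fun t => ENNReal.ofReal (R * t ^ (R - 1))) t) :=
    (Measurable.ennreal_ofReal (by fun_prop)).indicator
      (measurableSet_lt (f := fun p : α × ℝ => ENNReal.ofReal p.2) (by fun_prop) (by fun_prop))
  simp_rw [rpow_eq_lintegral_Ioi_indicator hR (f _)]
  rw [lintegral_lintegral_swap hmeas.aemeasurable]
  refine lintegral_congr fun t => ?_
  rw [← lintegral_indicator_const (measurableSet_lt measurable_const hf)]
  -- both integrands unfold to `if ENNReal.ofReal t < f x then _ else 0`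
  rfl

lemma measure_biUnion_finset_le_of_nested {ν τ : Measure α} {F : Finset (Set α)}
    (hm : ∀ Q ∈ F, MeasurableSet Q)
    (hn : ∀ Q ∈ F, ∀ Q' ∈ F, Disjoint Q Q' ∨ Q ⊆ Q' ∨ Q' ⊆ Q)
    (hle : ∀ Q ∈ F, ν Q ≤ τ Q) :
    ν (⋃ Q ∈ F, Q) ≤ τ (⋃ Q ∈ F, Q) := by
  classical
  set Fmax := F.filter (Maximal (· ∈ F))
  have hcover : ⋃ Q ∈ F, Q = ⋃ Q ∈ Fmax, Q := by
    refine subset_antisymm (iUnion₂_subset fun Q hQ => ?_)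
      (biUnion_subset_biUnion_left (Finset.filter_subset _ _))
    obtain ⟨Q', hQQ', hQ'⟩ := F.exists_le_maximal hQ
    exact hQQ'.trans (subset_biUnion_of_mem (u := id) (Finset.mem_filter.2 ⟨hQ'.1, hQ'⟩))
  have hdisj : (Fmax : Set (Set α)).PairwiseDisjoint id := by
    intro Q hQ Q' hQ' hne
    obtain ⟨hQF, hQmax⟩ := Finset.mem_filter.1 hQ
    obtain ⟨hQ'F, hQ'max⟩ := Finset.mem_filter.1 hQ'
    rcases hn Q hQF Q' hQ'F with h | h | h
    · exact h
    · exact absurd (hQmax.eq_of_subset hQ'F h) hne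
    · exact absurd (hQ'max.eq_of_subset hQF h).symm hne
  have hmax_meas : ∀ Q ∈ Fmax, MeasurableSet (id Q) := fun Q hQ => hm Q (Finset.mem_filter.1 hQ).1
  rw [hcover]
  calc ν (⋃ Q ∈ Fmax, Q) ≤ ∑ Q ∈ Fmax, ν Q := measure_biUnion_finset_le _ _
    _ ≤ ∑ Q ∈ Fmax, τ Q := Finset.sum_le_sum fun Q hQ => hle Q (Finset.mem_filter.1 hQ).1
    _ = τ (⋃ Q ∈ Fmax, Q) := (measure_biUnion_finset hdisj hmax_meas).symm

lemma measure_sUnion_le_of_nested {ν τ : Measure α} {𝒞 : Set (Set α)} (hc : 𝒞.Countable)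
    (hm : ∀ Q ∈ 𝒞, MeasurableSet Q)
    (hn : ∀ Q ∈ 𝒞, ∀ Q' ∈ 𝒞, Disjoint Q Q' ∨ Q ⊆ Q' ∨ Q' ⊆ Q)
    (hle : ∀ Q ∈ 𝒞, ν Q ≤ τ Q) :
    ν (⋃₀ 𝒞) ≤ τ (⋃₀ 𝒞) := by
  have := hc.to_subtype
  have hfin (F : Finset 𝒞) : ν (⋃ Q ∈ F, (Q : Set α)) ≤ τ (⋃ Q ∈ F, (Q : Set α)) := by
    have hF : ∀ Q ∈ F.image Subtype.val, Q ∈ 𝒞 := by simp +contextual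
    simpa [Finset.set_biUnion_finset_image] using measure_biUnion_finset_le_of_nested
      (fun Q hQ => hm Q (hF Q hQ)) (fun Q hQ Q' hQ' => hn Q (hF Q hQ) Q' (hF Q' hQ'))
      (fun Q hQ => hle Q (hF Q hQ))
  have hmono : Monotone fun F : Finset 𝒞 => ⋃ Q ∈ F, (Q : Set α) := fun F G hFG =>
    biUnion_subset_biUnion_left hFG
  rw [sUnion_eq_iUnion, iUnion_eq_iUnion_finset, hmono.directed_le.measure_iUnion]
  exact iSup_le fun F => (hfin F).trans (measure_mono (subset_iUnion (fun F : Finset 𝒞 =>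
    ⋃ Q ∈ F, (Q : Set α)) F))

noncomputable def maximalFunction (μ : Measure α) (𝒟 : Set (Set α)) (g : α → ℝ≥0∞) (x : α) :
    ℝ≥0∞ :=
  ⨆ Q ∈ 𝒟, ⨆ (_ : x ∈ Q), (μ Q)⁻¹ * ∫⁻ y in Q, g y ∂μ

variable {μ : Measure α} {𝒟 : Set (Set α)}

lemma le_maximalFunction {g : α → ℝ≥0∞} {Q : Set α} {x : α} (hQ : Q ∈ 𝒟) (hx : x ∈ Q) :
    (μ Q)⁻¹ * ∫⁻ y in Q, g y ∂μ ≤ maximalFunction μ 𝒟 g x :=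
  le_iSup₂_of_le Q hQ (le_iSup_of_le hx le_rfl)

lemma maximalFunction_eq_zero_of_notMem {g : α → ℝ≥0∞} {x : α} (hx : x ∉ ⋃₀ 𝒟) :
    maximalFunction μ 𝒟 g x = 0 :=
  le_zero_iff.1 (iSup₂_le fun Q hQ => iSup_le fun hxQ => absurd ⟨Q, hQ, hxQ⟩ hx)

lemma measurable_maximalFunction (hcount : 𝒟.Countable) (hmeas : ∀ Q ∈ 𝒟, MeasurableSet Q)
    (g : α → ℝ≥0∞) : Measurable (maximalFunction μ 𝒟 g) := by
  have := hcount.to_subtype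
  have heq : maximalFunction μ 𝒟 g =
      fun x => ⨆ Q : 𝒟, (Q : Set α).indicator (fun _ => (μ Q)⁻¹ * ∫⁻ y in Q, g y ∂μ) x := by
    funext x
    rw [maximalFunction, iSup_subtype']
    congr 1 with Q
    by_cases hx : x ∈ (Q : Set α)
    · rw [indicator_of_mem hx, ciSup_pos hx]
    · rw [indicator_of_notMem hx, iSup_neg hx, bot_eq_zero]
  rw [heq]
  exact .iSup fun Q => measurable_const.indicator (hmeas Q Q.2)

lemma maximalFunction_le_add {g h : α → ℝ≥0∞} {c : ℝ≥0∞} (hgh : ∀ y, g y ≤ h y + c) (x : α) :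
    maximalFunction μ 𝒟 g x ≤ maximalFunction μ 𝒟 h x + c := by
  refine iSup₂_le fun Q hQ => iSup_le fun hx => ?_
  calc (μ Q)⁻¹ * ∫⁻ y in Q, g y ∂μ
      ≤ (μ Q)⁻¹ * ∫⁻ y in Q, (h y + c) ∂μ := by gcongr; exact hgh _
    _ = (μ Q)⁻¹ * ∫⁻ y in Q, h y ∂μ + c * ((μ Q)⁻¹ * μ Q) := by
        rw [lintegral_add_right _ measurable_const, setLIntegral_const]; ring
    _ ≤ maximalFunction μ 𝒟 h x + c * 1 := by
        gcongr
        exacts [le_maximalFunction hQ hx, ENNReal.inv_mul_le_one _]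
    _ = maximalFunction μ 𝒟 h x + c := by rw [mul_one]

lemma maximalFunction_restrict_sUnion :
    maximalFunction (μ.restrict (⋃₀ 𝒟)) 𝒟 = maximalFunction μ 𝒟 := by
  funext g x
  refine iSup_congr fun Q => iSup_congr fun hQ => ?_
  rw [Measure.restrict_eq_self _ (subset_sUnion_of_mem hQ),
    Measure.restrict_restrict_of_subset (subset_sUnion_of_mem hQ)]

lemma mul_withDensity_lt_maximalFunction_le (hcount : 𝒟.Countable)
    (hmeas : ∀ Q ∈ 𝒟, MeasurableSet Q)
    (hnest : ∀ Q ∈ 𝒟, ∀ Q' ∈ 𝒟, Disjoint Q Q' ∨ Q ⊆ Q' ∨ Q' ⊆ Q)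
    (w : α → ℝ≥0∞) {h : α → ℝ≥0∞} (hh : Measurable h) (s : ℝ≥0∞) :
    s * μ.withDensity w {x | s < maximalFunction μ 𝒟 h x} ≤
      ∫⁻ y, h y * maximalFunction μ 𝒟 w y ∂μ := by
  set 𝒞 := {Q ∈ 𝒟 | s < (μ Q)⁻¹ * ∫⁻ y in Q, h y ∂μ}
  have hcover : {x | s < maximalFunction μ 𝒟 h x} ⊆ ⋃₀ 𝒞 := by
    intro x hx
    simp only [mem_ofPred_eq, maximalFunction, lt_iSup_iff] at hx
    obtain ⟨Q, hQ, hxQ, hlt⟩ := hx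
    exact ⟨Q, ⟨hQ, hlt⟩, hxQ⟩
  have hcube : ∀ Q ∈ 𝒞, (s • μ.withDensity w) Q ≤
      μ.withDensity (fun y => h y * maximalFunction μ 𝒟 w y) Q := by
    rintro Q ⟨hQ, hlt⟩
    rw [Measure.smul_apply, smul_eq_mul, withDensity_apply _ (hmeas Q hQ),
      withDensity_apply _ (hmeas Q hQ)]
    calc s * ∫⁻ y in Q, w y ∂μ
        ≤ (μ Q)⁻¹ * (∫⁻ y in Q, h y ∂μ) * ∫⁻ y in Q, w y ∂μ := by gcongr
      _ = ∫⁻ y in Q, h y * ((μ Q)⁻¹ * ∫⁻ z in Q, w z ∂μ) ∂μ := by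
          rw [lintegral_mul_const _ hh]; ring
      _ ≤ ∫⁻ y in Q, h y * maximalFunction μ 𝒟 w y ∂μ :=
          setLIntegral_mono' (hmeas Q hQ) fun y hy => by gcongr; exact le_maximalFunction hQ hy
  calc s * μ.withDensity w {x | s < maximalFunction μ 𝒟 h x}
      ≤ (s • μ.withDensity w) (⋃₀ 𝒞) := by
        rw [Measure.smul_apply, smul_eq_mul]; gcongr
    _ ≤ μ.withDensity (fun y => h y * maximalFunction μ 𝒟 w y) (⋃₀ 𝒞) :=
        measure_sUnion_le_of_nested (hcount.mono (sep_subset _ _)) (fun Q hQ => hmeas Q hQ.1)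
          (fun Q hQ Q' hQ' => hnest Q hQ.1 Q' hQ'.1) hcube
    _ ≤ ∫⁻ y, h y * maximalFunction μ 𝒟 w y ∂μ := by
        refine (measure_mono (subset_univ _)).trans_eq ?_
        rw [withDensity_apply _ .univ, Measure.restrict_univ]

lemma mul_withDensity_add_lt_maximalFunction_le (hcount : 𝒟.Countable)
    (hmeas : ∀ Q ∈ 𝒟, MeasurableSet Q)
    (hnest : ∀ Q ∈ 𝒟, ∀ Q' ∈ 𝒟, Disjoint Q Q' ∨ Q ⊆ Q' ∨ Q' ⊆ Q)
    (w : α → ℝ≥0∞) {g : α → ℝ≥0∞} (hg : Measurable g) (a b : ℝ≥0∞) :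
    a * μ.withDensity w {x | a + b < maximalFunction μ 𝒟 g x} ≤
      ∫⁻ y, (g y - b) * maximalFunction μ 𝒟 w y ∂μ := by
  calc a * μ.withDensity w {x | a + b < maximalFunction μ 𝒟 g x}
      ≤ a * μ.withDensity w {x | a < maximalFunction μ 𝒟 (fun y => g y - b) x} := by
        refine mul_le_mul_right (measure_mono fun x hx => ?_) a
        exact lt_of_add_lt_add_right (hx.trans_le (maximalFunction_le_add (fun y => le_tsub_add) x))
    _ ≤ _ := mul_withDensity_lt_maximalFunction_le hcount hmeas hnest w (hg.sub measurable_const) a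

lemma mul_withDensity_ofReal_lt_maximalFunction_le (hcount : 𝒟.Countable)
    (hmeas : ∀ Q ∈ 𝒟, MeasurableSet Q)
    (hnest : ∀ Q ∈ 𝒟, ∀ Q' ∈ 𝒟, Disjoint Q Q' ∨ Q ⊆ Q' ∨ Q' ⊆ Q)
    (w : α → ℝ≥0∞) {g : α → ℝ≥0∞} (hg : Measurable g) {R : ℝ} (hR : 1 < R) {t : ℝ}
    (ht : 0 < t) :
    ENNReal.ofReal (R * t ^ (R - 1)) *
        μ.withDensity w {x | ENNReal.ofReal t < maximalFunction μ 𝒟 g x} ≤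
      ENNReal.ofReal (R ^ 2 * t ^ (R - 2)) *
        ∫⁻ y, (g y - ENNReal.ofReal (t / R.conjExponent)) * maximalFunction μ 𝒟 w y ∂μ := by
  have hR0 : 0 < R := by linarith
  have hR' : 0 < R.conjExponent := div_pos hR0 (by linarith)
  have hsplit :
      ENNReal.ofReal t = ENNReal.ofReal (t / R) + ENNReal.ofReal (t / R.conjExponent) := by
    rw [← ENNReal.ofReal_add (by positivity) (div_nonneg ht.le hR'.le)]
    congr 1
    rw [Real.conjExponent]
    field_simp
    ring
  have hcoef : ENNReal.ofReal (R * t ^ (R - 1)) =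
      ENNReal.ofReal (R ^ 2 * t ^ (R - 2)) * ENNReal.ofReal (t / R) := by
    rw [← ENNReal.ofReal_mul (by positivity)]
    congr 1
    rw [show R - 1 = R - 2 + 1 by ring, Real.rpow_add_one ht.ne']
    field_simp
  rw [hcoef, hsplit, mul_assoc]
  gcongr
  exact mul_withDensity_add_lt_maximalFunction_le hcount hmeas hnest w hg _ _

theorem lintegral_maximalFunction_rpow_mul_le_of_sFinite [SFinite μ] (hcount : 𝒟.Countable)
    (hmeas : ∀ Q ∈ 𝒟, MeasurableSet Q)
    (hnest : ∀ Q ∈ 𝒟, ∀ Q' ∈ 𝒟, Disjoint Q Q' ∨ Q ⊆ Q' ∨ Q' ⊆ Q)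
    {w g : α → ℝ≥0∞} (hw : Measurable w) (hg : Measurable g) {R : ℝ} (hR : 1 < R) :
    ∫⁻ x, maximalFunction μ 𝒟 g x ^ R * w x ∂μ ≤
      ENNReal.ofReal (R.conjExponent ^ R) * ∫⁻ x, g x ^ R * maximalFunction μ 𝒟 w x ∂μ := by
  set M := maximalFunction μ 𝒟
  have hR0 : 0 < R := by linarith
  have hMg := measurable_maximalFunction (μ := μ) hcount hmeas g
  have hMw := measurable_maximalFunction (μ := μ) hcount hmeas w
  calc ∫⁻ x, M g x ^ R * w x ∂μ = ∫⁻ x, M g x ^ R ∂μ.withDensity w := by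
        rw [lintegral_withDensity_eq_lintegral_mul _ hw (hMg.pow_const R)]
        exact lintegral_congr fun x => mul_comm _ _
    _ = ∫⁻ t in Ioi 0, ENNReal.ofReal (R * t ^ (R - 1)) *
          μ.withDensity w {x | ENNReal.ofReal t < M g x} :=
        lintegral_rpow_eq_lintegral_meas_ofReal_lt_mul hMg hR0
    _ ≤ ∫⁻ t in Ioi 0, ENNReal.ofReal (R ^ 2 * t ^ (R - 2)) *
          ∫⁻ y, (g y - ENNReal.ofReal (t / R.conjExponent)) * M w y ∂μ :=
        setLIntegral_mono' measurableSet_Ioi fun t ht =>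
          mul_withDensity_ofReal_lt_maximalFunction_le hcount hmeas hnest w hg hR ht
    _ = ∫⁻ y, (∫⁻ t in Ioi 0, ENNReal.ofReal (R ^ 2 * t ^ (R - 2)) *
          (g y - ENNReal.ofReal (t / R.conjExponent))) * M w y ∂μ := by
        simp_rw [← lintegral_const_mul' _ _ ENNReal.ofReal_ne_top]
        rw [lintegral_lintegral_swap (by fun_prop)]
        refine lintegral_congr fun y => ?_
        rw [← lintegral_mul_const _ (by fun_prop)]
        simp_rw [mul_assoc]
    _ = ENNReal.ofReal (R.conjExponent ^ R) * ∫⁻ x, g x ^ R * M w x ∂μ := by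
        simp_rw [lintegral_Ioi_rpow_mul_tsub hR, mul_assoc]
        exact lintegral_const_mul' _ _ ENNReal.ofReal_ne_top

theorem lintegral_maximalFunction_rpow_mul_le (hcount : 𝒟.Countable)
    (hmeas : ∀ Q ∈ 𝒟, MeasurableSet Q) (hfin : ∀ Q ∈ 𝒟, μ Q ≠ ∞)
    (hnest : ∀ Q ∈ 𝒟, ∀ Q' ∈ 𝒟, Disjoint Q Q' ∨ Q ⊆ Q' ∨ Q' ⊆ Q)
    {w g : α → ℝ≥0∞} (hw : Measurable w) (hg : Measurable g) {R : ℝ} (hR : 1 < R) :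
    ∫⁻ x, maximalFunction μ 𝒟 g x ^ R * w x ∂μ ≤
      ENNReal.ofReal (R.conjExponent ^ R) * ∫⁻ x, g x ^ R * maximalFunction μ 𝒟 w x ∂μ := by
  set S := ⋃₀ 𝒟
  have hS : MeasurableSet S := .sUnion hcount hmeas
  have : SigmaFinite (μ.restrict S) := by
    refine Measure.sigmaFinite_of_countable (hcount.insert Sᶜ) ?_
      (by rw [sUnion_insert, compl_union_self])
    rintro Q (rfl | hQ)
    · simp [Measure.restrict_apply hS.compl]
    · exact (Measure.restrict_apply_le _ _).trans_lt (hfin Q hQ).lt_top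
  have hsupp : (fun x => maximalFunction μ 𝒟 g x ^ R * w x).support ⊆ S := fun x hx => by
    by_contra hxS
    simp [maximalFunction_eq_zero_of_notMem hxS, ENNReal.zero_rpow_of_pos (by linarith)] at hx
  calc ∫⁻ x, maximalFunction μ 𝒟 g x ^ R * w x ∂μ
      = ∫⁻ x in S, maximalFunction μ 𝒟 g x ^ R * w x ∂μ :=
        (setLIntegral_eq_of_support_subset hsupp).symm
    _ ≤ ENNReal.ofReal (R.conjExponent ^ R) * ∫⁻ x in S, g x ^ R * maximalFunction μ 𝒟 w x ∂μ := by
        have hM : maximalFunction (μ.restrict S) 𝒟 = maximalFunction μ 𝒟 :=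
          maximalFunction_restrict_sUnion
        simpa only [hM] using
          lintegral_maximalFunction_rpow_mul_le_of_sFinite (μ := μ.restrict S) hcount hmeas hnest
            hw hg hR
    _ ≤ ENNReal.ofReal (R.conjExponent ^ R) * ∫⁻ x, g x ^ R * maximalFunction μ 𝒟 w x ∂μ := by
        gcongr
        exact Measure.restrict_le_self

end

/-- For `1 ≤ q < p < ∞` and any weight `w`,
`‖ℳ_q f‖_{L^p(w)} ≤ ((p/q)')^{1/q} ‖f‖_{L^p(ℳw)}`, where `ℳ_q f = (ℳ(|f|^q))^{1/q}` and `ℳ`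
is the dyadic maximal operator. -/
theorem stmt_9 {α : Type*} [MeasurableSpace α] (μ : Measure α)
    (𝒟 : Set (Set α)) (hcount : 𝒟.Countable)
    (hmeas : ∀ Q ∈ 𝒟, MeasurableSet Q)
    (hfin : ∀ Q ∈ 𝒟, 0 < μ Q ∧ μ Q < ⊤)
    (hnest : ∀ Q ∈ 𝒟, ∀ Q' ∈ 𝒟, Disjoint Q Q' ∨ Q ⊆ Q' ∨ Q' ⊆ Q)
    (M : (α → ℝ≥0∞) → α → ℝ≥0∞)
    (hM : M = fun g x => ⨆ Q ∈ 𝒟, ⨆ (_ : x ∈ Q), (μ Q)⁻¹ * ∫⁻ y in Q, g y ∂μ)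
    (w f : α → ℝ≥0∞) (hw : Measurable w) (hf : Measurable f)
    (p q : ℝ) (hq : 1 ≤ q) (hqp : q < p) :
    (∫⁻ x, (M (fun y => f y ^ q) x) ^ (p / q) * w x ∂μ) ^ (1 / p) ≤
      ENNReal.ofReal (((p / q) / (p / q - 1)) ^ (1 / q)) *
        (∫⁻ x, f x ^ p * M w x ∂μ) ^ (1 / p) := by
  obtain rfl : M = maximalFunction μ 𝒟 := hM
  have hq0 : 0 < q := by linarith
  have hp0 : 0 < p := by linarith
  have hR : 1 < p / q := (one_lt_div hq0).2 hqp
  have hpow : ∀ x, (f x ^ q) ^ (p / q) = f x ^ p := fun x => by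
    rw [← ENNReal.rpow_mul, mul_div_cancel₀ _ hq0.ne']
  have hstrong := lintegral_maximalFunction_rpow_mul_le hcount hmeas (fun Q hQ => (hfin Q hQ).2.ne)
    hnest hw (hf.pow_const q) hR
  simp_rw [hpow] at hstrong
  have hC : 0 < (p / q).conjExponent := div_pos (by linarith) (by linarith)
  calc (∫⁻ x, maximalFunction μ 𝒟 (fun y => f y ^ q) x ^ (p / q) * w x ∂μ) ^ (1 / p)
      ≤ (ENNReal.ofReal ((p / q).conjExponent ^ (p / q)) *
          ∫⁻ x, f x ^ p * maximalFunction μ 𝒟 w x ∂μ) ^ (1 / p) := by gcongr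
    _ = ENNReal.ofReal ((p / q).conjExponent ^ (1 / q)) *
          (∫⁻ x, f x ^ p * maximalFunction μ 𝒟 w x ∂μ) ^ (1 / p) := by
        rw [ENNReal.mul_rpow_of_nonneg _ _ (by positivity), ENNReal.ofReal_rpow_of_nonneg
          (by positivity) (by positivity), ← Real.rpow_mul hC.le]
        congr 3
        field_simp
end

section
/- Kolmogorov-type self-improvement: there is an absolute constant c such that for every 0 < δ < 1 and every locally integrable f with ℳf < ∞ a.e., ℳ((ℳf)^δ) ≤ c (1−δ)^{-1} (ℳf)^δ pointwise a.e.; in particular (ℳf)^δ is an A₁ weight with [(ℳf)^δ]_{A₁} ≤ c/(1−δ). -/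
/-!
Fix a cube `Q ∋ x` and split `f = f 𝟙_Q + f 𝟙_{Qᶜ}`. Since `𝒟` is laminar, a cube through a
point of `Q` on which `f 𝟙_{Qᶜ}` has nonzero average must contain `Q`, hence `x`; so
`ℳ(f 𝟙_{Qᶜ}) ≤ ℳf(x)` on `Q`. The local part obeys the weak (1,1) bound of `ℳ` (the maximal
members of a finite laminar family are disjoint and cover it), and Kolmogorov's inequality,
obtained by summing the weak bound over the dyadic levels `a 2ᵏ` of `ℳ(f 𝟙_Q)`, gives
`⨍_Q ℳ(f 𝟙_Q)^δ ≤ 5 (1-δ)⁻¹ (⨍_Q f)^δ ≤ 5 (1-δ)⁻¹ ℳf(x)^δ`. Subadditivity of `t ↦ t^δ`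
combines the two parts.
-/

open MeasureTheory Set
open scoped ENNReal

def IsLaminar {α : Type*} (S : Set (Set α)) : Prop :=
  ∀ Q ∈ S, ∀ Q' ∈ S, Disjoint Q Q' ∨ Q ⊆ Q' ∨ Q' ⊆ Q

namespace IsLaminar

variable {α : Type*} {S T : Set (Set α)}

theorem mono (hST : T ⊆ S) (hS : IsLaminar S) : IsLaminar T :=
  fun Q hQ Q' hQ' => hS Q (hST hQ) Q' (hST hQ')

variable [MeasurableSpace α] {μ ν : Measure α}

theorem measure_sUnion_le_of_finite (hlam : IsLaminar T) (hT : T.Finite)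
    (hmeas : ∀ Q ∈ T, MeasurableSet Q) (hle : ∀ Q ∈ T, μ Q ≤ ν Q) :
    μ (⋃₀ T) ≤ ν (⋃₀ T) := by
  set T' := {Q | Maximal (· ∈ T) Q}
  have hT'T : T' ⊆ T := fun Q hQ => hQ.prop
  have hT' : T'.Countable := (hT.subset hT'T).countable
  have hcover : ⋃₀ T = ⋃₀ T' := by
    refine (sUnion_subset fun Q hQ => ?_).antisymm (sUnion_mono hT'T)
    obtain ⟨Q', hQQ', hQ'⟩ := hT.exists_le_maximal hQ
    exact hQQ'.trans (subset_sUnion_of_mem hQ')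
  have hdisj : T'.Pairwise Disjoint := by
    intro Q hQ Q' hQ' hne
    rcases hlam Q hQ.prop Q' hQ'.prop with h | h | h
    · exact h
    · exact absurd (hQ.eq_of_le hQ'.prop h) hne
    · exact absurd (hQ'.eq_of_le hQ.prop h).symm hne
  calc μ (⋃₀ T) = μ (⋃₀ T') := by rw [hcover]
    _ ≤ ∑' Q : T', μ Q := by rw [sUnion_eq_biUnion]; exact measure_biUnion_le μ hT' _
    _ ≤ ∑' Q : T', ν Q := ENNReal.tsum_le_tsum fun Q => hle Q (hT'T Q.2)
    _ = ν (⋃₀ T') := (measure_sUnion hT' hdisj fun Q hQ => hmeas Q (hT'T hQ)).symm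
    _ = ν (⋃₀ T) := by rw [hcover]

theorem measure_sUnion_le (hlam : IsLaminar S) (hS : S.Countable)
    (hmeas : ∀ Q ∈ S, MeasurableSet Q) (hle : ∀ Q ∈ S, μ Q ≤ ν Q) :
    μ (⋃₀ S) ≤ ν (⋃₀ S) := by
  have := hS.to_subtype
  have hdir : Directed (· ⊆ ·) fun F : Finset S => ⋃ Q ∈ F, (Q : Set α) :=
    Monotone.directed_le fun F G hFG => biUnion_subset_biUnion_left hFG
  calc μ (⋃₀ S) = ⨆ F : Finset S, μ (⋃ Q ∈ F, (Q : Set α)) := by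
        rw [sUnion_eq_iUnion, iUnion_eq_iUnion_finset, hdir.measure_iUnion]
    _ ≤ ν (⋃₀ S) := iSup_le fun F => by
        have hFS : Subtype.val '' (F : Set S) ⊆ S := Subtype.coe_image_subset S _
        have hF : ⋃₀ (Subtype.val '' (F : Set S)) = ⋃ Q ∈ F, (Q : Set α) := sUnion_image _ _
        rw [← hF]
        exact ((hlam.mono hFS).measure_sUnion_le_of_finite (F.finite_toSet.image _)
          (fun Q hQ => hmeas Q (hFS hQ)) fun Q hQ => hle Q (hFS hQ)).trans
          (measure_mono (sUnion_mono hFS))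

end IsLaminar

theorem ENNReal.exists_mul_two_pow_lt_le {a x : ℝ≥0∞} (ha : a ≠ 0) (hax : a < x)
    (hx : x ≠ ⊤) :
    ∃ k : ℕ, a * 2 ^ k < x ∧ x ≤ a * 2 ^ (k + 1) := by
  have hgrow : Filter.Tendsto (fun n : ℕ => a * 2 ^ n) Filter.atTop (nhds ⊤) := by
    simpa [ENNReal.mul_top ha] using ENNReal.Tendsto.const_mul (a := a)
      (ENNReal.tendsto_pow_atTop_nhds_top_iff.2 one_lt_two) (.inl ENNReal.top_ne_zero)
  obtain ⟨n, hn⟩ := (hgrow.eventually (lt_mem_nhds hx.lt_top)).exists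
  by_contra! H
  have hbelow (k : ℕ) : a * 2 ^ k < x := Nat.rec (by simpa using hax) (fun k hk => H k hk) k
  exact (hbelow n).not_gt hn

theorem ENNReal.rpow_le_add_tsum_indicator {a : ℝ≥0∞} (ha0 : a ≠ 0) (ha : a ≠ ⊤) {δ : ℝ}
    (hδ : 0 < δ) (x : ℝ≥0∞) :
    x ^ δ ≤
      a ^ δ + ∑' k : ℕ, (Ioi (a * 2 ^ k)).indicator (fun _ => (a * 2 ^ (k + 1)) ^ δ) x := by
  rcases le_or_gt x a with hxa | hax
  · exact le_add_right (ENNReal.rpow_le_rpow hxa hδ.le)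
  rcases eq_or_ne x ⊤ with rfl | hx
  · have hterm (k : ℕ) : a ^ δ ≤
        (Ioi (a * 2 ^ k)).indicator (fun _ => (a * 2 ^ (k + 1)) ^ δ) (⊤ : ℝ≥0∞) := by
      rw [indicator_of_mem (show ⊤ ∈ Ioi (a * 2 ^ k) from
        ENNReal.mul_lt_top ha.lt_top (ENNReal.pow_lt_top ENNReal.ofNat_lt_top))]
      exact ENNReal.rpow_le_rpow (le_mul_of_one_le_right zero_le (one_le_pow₀ one_le_two)) hδ.le
    refine le_add_left (le_top.trans_eq (Eq.symm ?_))
    exact top_le_iff.1 ((ENNReal.tsum_const_eq_top_of_ne_zero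
      (ENNReal.rpow_pos (pos_iff_ne_zero.2 ha0) ha).ne').symm.le.trans
      (ENNReal.tsum_le_tsum hterm))
  obtain ⟨k, hk, hk'⟩ := ENNReal.exists_mul_two_pow_lt_le ha0 hax hx
  calc x ^ δ ≤ (a * 2 ^ (k + 1)) ^ δ := ENNReal.rpow_le_rpow hk' hδ.le
    _ = (Ioi (a * 2 ^ k)).indicator (fun _ => (a * 2 ^ (k + 1)) ^ δ) x :=
      (indicator_of_mem (show x ∈ Ioi (a * 2 ^ k) from hk)
        fun _ => (a * 2 ^ (k + 1)) ^ δ).symm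
    _ ≤ _ := ENNReal.le_tsum k
    _ ≤ _ := le_add_self

theorem ENNReal.one_add_two_rpow_mul_inv_le {δ : ℝ} (hδ0 : 0 ≤ δ) (hδ1 : δ < 1) :
    1 + 2 ^ δ * (1 - 2 ^ δ / 2)⁻¹ ≤ 5 * (ENNReal.ofReal (1 - δ))⁻¹ := by
  have hK : 1 ≤ (ENNReal.ofReal (1 - δ))⁻¹ :=
    ENNReal.one_le_inv.2 (ENNReal.ofReal_le_one.2 (by linarith))
  have htwo : (2 : ℝ≥0∞) ^ δ ≤ 2 := by
    simpa using ENNReal.rpow_le_rpow_of_exponent_le one_le_two hδ1.le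
  have hbernoulli : (2 : ℝ≥0∞) ^ δ + ENNReal.ofReal (1 - δ) ≤ 2 := by
    have h := rpow_one_add_le_one_add_mul_self (s := 1) (by norm_num) hδ0 hδ1.le
    rw [← ENNReal.ofReal_ofNat 2, ENNReal.ofReal_rpow_of_pos two_pos,
      ← ENNReal.ofReal_add (by positivity) (by linarith)]
    exact ENNReal.ofReal_le_ofReal (by norm_num at h; linarith)
  have hgap : (1 - 2 ^ δ / 2)⁻¹ ≤ 2 * (ENNReal.ofReal (1 - δ))⁻¹ := by
    rw [← div_eq_mul_inv, ← ENNReal.inv_div (.inl ENNReal.ofNat_ne_top) (.inl two_ne_zero)]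
    refine ENNReal.inv_le_inv.2 (ENNReal.le_sub_of_add_le_left (by finiteness) ?_)
    rw [ENNReal.div_add_div_same]
    exact ENNReal.div_le_of_le_mul (by simpa using hbernoulli)
  calc 1 + 2 ^ δ * (1 - 2 ^ δ / 2)⁻¹
        ≤ (ENNReal.ofReal (1 - δ))⁻¹ + 2 * (2 * (ENNReal.ofReal (1 - δ))⁻¹) := by gcongr
    _ = 5 * (ENNReal.ofReal (1 - δ))⁻¹ := by ring

theorem inv_mul_lintegral_rpow_le_of_weak_bound {α : Type*} [MeasurableSpace α] {ν : Measure α}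
    {h : α → ℝ≥0∞} (hh : Measurable h) {A : ℝ≥0∞} (hA0 : A ≠ 0) (hA : A ≠ ⊤) (hν0 : ν univ ≠ 0)
    (hν : ν univ ≠ ⊤) (hweak : ∀ t ≠ 0, ν {y | t < h y} ≤ A / t) {δ : ℝ} (hδ0 : 0 < δ)
    (hδ1 : δ < 1) :
    (ν univ)⁻¹ * ∫⁻ y, h y ^ δ ∂ν ≤ 5 * (ENNReal.ofReal (1 - δ))⁻¹ * ((ν univ)⁻¹ * A) ^ δ := by
  set V := ν univ with hV
  set a := V⁻¹ * A
  have ha0 : a ≠ 0 := mul_ne_zero (ENNReal.inv_ne_zero.2 hν) hA0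
  have ha : a ≠ ⊤ := ENNReal.mul_ne_top (ENNReal.inv_ne_top.2 hν0) hA
  have hAa : A = a * V := by
    rw [mul_comm, ← mul_assoc, ENNReal.mul_inv_cancel hν0 hν, one_mul]
  have hlevel (k : ℕ) : MeasurableSet {y | a * 2 ^ k < h y} :=
    measurableSet_lt measurable_const hh
  have hterm (k : ℕ) : (a * 2 ^ (k + 1)) ^ δ * ν {y | a * 2 ^ k < h y} ≤
      a ^ δ * V * 2 ^ δ * (2 ^ δ / 2) ^ k := by
    calc (a * 2 ^ (k + 1)) ^ δ * ν {y | a * 2 ^ k < h y}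
        ≤ (a * 2 ^ (k + 1)) ^ δ * (A / (a * 2 ^ k)) := by
          gcongr; exact hweak _ (mul_ne_zero ha0 (by positivity))
      _ = a ^ δ * V * 2 ^ δ * (2 ^ δ / 2) ^ k := by
          have hpow : ((2 : ℝ≥0∞) ^ (k + 1)) ^ δ = 2 ^ δ * (2 ^ δ) ^ k := by
            rw [← pow_succ', ← ENNReal.rpow_natCast (2 ^ δ), ← ENNReal.rpow_mul,
              ← ENNReal.rpow_natCast 2, ← ENNReal.rpow_mul, mul_comm]
          rw [hAa, ENNReal.mul_div_mul_left _ _ ha0 ha, ENNReal.mul_rpow_of_nonneg _ _ hδ0.le, hpow,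
            div_eq_mul_inv, div_eq_mul_inv, mul_pow, ENNReal.inv_pow]
          ring
  have hint : ∫⁻ y, h y ^ δ ∂ν ≤ a ^ δ * V * (1 + 2 ^ δ * (1 - 2 ^ δ / 2)⁻¹) :=
    calc ∫⁻ y, h y ^ δ ∂ν
        ≤ ∫⁻ y, (a ^ δ + ∑' k : ℕ,
            {y | a * 2 ^ k < h y}.indicator (fun _ => (a * 2 ^ (k + 1)) ^ δ) y) ∂ν :=
          lintegral_mono fun y => ENNReal.rpow_le_add_tsum_indicator ha0 ha hδ0 (h y)
      _ = a ^ δ * V + ∑' k : ℕ, (a * 2 ^ (k + 1)) ^ δ * ν {y | a * 2 ^ k < h y} := by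
          rw [lintegral_add_left measurable_const, lintegral_const,
            lintegral_tsum fun k => (measurable_const.indicator (hlevel k)).aemeasurable]
          simp only [lintegral_indicator_const (hlevel _), ← hV]
      _ ≤ a ^ δ * V + ∑' k : ℕ, a ^ δ * V * 2 ^ δ * (2 ^ δ / 2) ^ k :=
          add_le_add le_rfl (ENNReal.tsum_le_tsum hterm)
      _ = a ^ δ * V * (1 + 2 ^ δ * (1 - 2 ^ δ / 2)⁻¹) := by
          rw [ENNReal.tsum_mul_left, ENNReal.tsum_geometric]; ring
  calc V⁻¹ * ∫⁻ y, h y ^ δ ∂ν ≤ V⁻¹ * (a ^ δ * V * (1 + 2 ^ δ * (1 - 2 ^ δ / 2)⁻¹)) := by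
        gcongr
    _ = a ^ δ * (1 + 2 ^ δ * (1 - 2 ^ δ / 2)⁻¹) := by
        rw [mul_comm (a ^ δ), mul_assoc, ← mul_assoc, ENNReal.inv_mul_cancel hν0 hν, one_mul]
    _ ≤ a ^ δ * (5 * (ENNReal.ofReal (1 - δ))⁻¹) := by
        gcongr; exact ENNReal.one_add_two_rpow_mul_inv_le hδ0.le hδ1
    _ = 5 * (ENNReal.ofReal (1 - δ))⁻¹ * a ^ δ := mul_comm _ _

section

variable {α : Type*} [MeasurableSpace α] {μ : Measure α} {𝒟 : Set (Set α)}

noncomputable def dyadicMaximal (μ : Measure α) (𝒟 : Set (Set α)) (g : α → ℝ≥0∞) (x : α) : ℝ≥0∞ :=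
  ⨆ Q ∈ 𝒟, ⨆ (_ : x ∈ Q), (μ Q)⁻¹ * ∫⁻ y in Q, g y ∂μ

theorem setLAverage_le_dyadicMaximal {g : α → ℝ≥0∞} {Q : Set α} (hQ : Q ∈ 𝒟) {x : α}
    (hx : x ∈ Q) : (μ Q)⁻¹ * ∫⁻ y in Q, g y ∂μ ≤ dyadicMaximal μ 𝒟 g x :=
  le_iSup₂_of_le Q hQ (le_iSup_of_le hx le_rfl)

theorem dyadicMaximal_le_iff {g : α → ℝ≥0∞} {x : α} {c : ℝ≥0∞} :
    dyadicMaximal μ 𝒟 g x ≤ c ↔ ∀ Q ∈ 𝒟, x ∈ Q → (μ Q)⁻¹ * ∫⁻ y in Q, g y ∂μ ≤ c := by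
  simp only [dyadicMaximal, iSup_le_iff]

theorem measurable_dyadicMaximal (hcount : 𝒟.Countable) (hmeas : ∀ Q ∈ 𝒟, MeasurableSet Q)
    (g : α → ℝ≥0∞) : Measurable (dyadicMaximal μ 𝒟 g) := by
  have hind (Q : Set α) : (fun x => ⨆ (_ : x ∈ Q), (μ Q)⁻¹ * ∫⁻ y in Q, g y ∂μ) =
      Q.indicator fun _ => (μ Q)⁻¹ * ∫⁻ y in Q, g y ∂μ := by
    ext x; by_cases hx : x ∈ Q <;> simp [hx]
  exact Measurable.biSup _ hcount fun Q hQ => hind Q ▸ measurable_const.indicator (hmeas Q hQ)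

theorem dyadicMaximal_eq_zero {g : α → ℝ≥0∞} (hg : ∫⁻ y, g y ∂μ = 0) (x : α) :
    dyadicMaximal μ 𝒟 g x = 0 := by
  refine nonpos_iff_eq_zero.1 (dyadicMaximal_le_iff.2 fun Q _ _ => ?_)
  rw [nonpos_iff_eq_zero.1 ((setLIntegral_le_lintegral Q g).trans hg.le), mul_zero]

theorem dyadicMaximal_add_le {g g' : α → ℝ≥0∞} (hg : Measurable g) (x : α) :
    dyadicMaximal μ 𝒟 (g + g') x ≤ dyadicMaximal μ 𝒟 g x + dyadicMaximal μ 𝒟 g' x := by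
  refine dyadicMaximal_le_iff.2 fun Q hQ hx => ?_
  simp only [Pi.add_apply, lintegral_add_left hg, mul_add]
  exact add_le_add (setLAverage_le_dyadicMaximal hQ hx) (setLAverage_le_dyadicMaximal hQ hx)

theorem dyadicMaximal_indicator_compl_le (hlam : IsLaminar 𝒟)
    (hmeas : ∀ Q ∈ 𝒟, MeasurableSet Q) (g : α → ℝ≥0∞) {Q : Set α} (hQ : Q ∈ 𝒟) {x y : α}
    (hx : x ∈ Q) (hy : y ∈ Q) :
    dyadicMaximal μ 𝒟 (Qᶜ.indicator g) y ≤ dyadicMaximal μ 𝒟 g x := by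
  refine dyadicMaximal_le_iff.2 fun Q' hQ' hy' => ?_
  rcases hlam Q hQ Q' hQ' with hdisj | hQQ' | hQ'Q
  · exact absurd hy' (disjoint_left.1 hdisj hy)
  · refine le_trans ?_ (setLAverage_le_dyadicMaximal hQ' (hQQ' hx))
    gcongr with z
    exact indicator_le_self _ _ z
  · rw [setLIntegral_indicator (hmeas Q hQ).compl,
      (disjoint_compl_left.mono_right hQ'Q).inter_eq, Measure.restrict_empty,
      lintegral_zero_measure, mul_zero]
    exact zero_le

theorem measure_lt_dyadicMaximal_le (hcount : 𝒟.Countable) (hmeas : ∀ Q ∈ 𝒟, MeasurableSet Q)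
    (hlam : IsLaminar 𝒟) (g : α → ℝ≥0∞) {t : ℝ≥0∞} (ht : t ≠ 0) :
    μ {y | t < dyadicMaximal μ 𝒟 g y} ≤ (∫⁻ y, g y ∂μ) / t := by
  set S := {Q ∈ 𝒟 | t < (μ Q)⁻¹ * ∫⁻ y in Q, g y ∂μ}
  have hS𝒟 : S ⊆ 𝒟 := sep_subset _ _
  have hsub : {y | t < dyadicMaximal μ 𝒟 g y} ⊆ ⋃₀ S := by
    intro y hy
    simp only [dyadicMaximal, mem_ofPred_eq, lt_iSup_iff] at hy
    obtain ⟨Q, hQ, hyQ, hQt⟩ := hy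
    exact ⟨Q, ⟨hQ, hQt⟩, hyQ⟩
  have hle : ∀ Q ∈ S, μ Q ≤ (t⁻¹ • μ.withDensity g) Q := by
    rintro Q ⟨hQ, hQt⟩
    rw [Measure.smul_apply, withDensity_apply _ (hmeas Q hQ), smul_eq_mul,
      ← ENNReal.div_eq_inv_mul, ENNReal.le_div_iff_mul_le (.inl ht) (.inl hQt.ne_top)]
    calc μ Q * t ≤ μ Q * ((μ Q)⁻¹ * ∫⁻ y in Q, g y ∂μ) := by gcongr
      _ ≤ ∫⁻ y in Q, g y ∂μ := by
        rw [← mul_assoc]; exact mul_le_of_le_one_left zero_le (ENNReal.mul_inv_le_one _)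
  calc μ {y | t < dyadicMaximal μ 𝒟 g y} ≤ μ (⋃₀ S) := measure_mono hsub
    _ ≤ (t⁻¹ • μ.withDensity g) (⋃₀ S) :=
      (hlam.mono hS𝒟).measure_sUnion_le (hcount.mono hS𝒟) (fun Q hQ => hmeas Q (hS𝒟 hQ)) hle
    _ ≤ (t⁻¹ • μ.withDensity g) univ := measure_mono (subset_univ _)
    _ = (∫⁻ y, g y ∂μ) / t := by
      rw [Measure.smul_apply, withDensity_apply _ MeasurableSet.univ, Measure.restrict_univ,
        smul_eq_mul, ENNReal.div_eq_inv_mul]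

theorem setLAverage_rpow_dyadicMaximal_indicator_le (hcount : 𝒟.Countable)
    (hmeas : ∀ Q ∈ 𝒟, MeasurableSet Q) (hlam : IsLaminar 𝒟) (f : α → ℝ≥0∞) {Q : Set α}
    (hQ : Q ∈ 𝒟) (hμ0 : μ Q ≠ 0) (hμ : μ Q ≠ ⊤) {δ : ℝ} (hδ0 : 0 < δ) (hδ1 : δ < 1) :
    (μ Q)⁻¹ * ∫⁻ y in Q, dyadicMaximal μ 𝒟 (Q.indicator f) y ^ δ ∂μ ≤
      5 * (ENNReal.ofReal (1 - δ))⁻¹ * ((μ Q)⁻¹ * ∫⁻ y in Q, f y ∂μ) ^ δ := by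
  have hA : ∫⁻ y, Q.indicator f y ∂μ = ∫⁻ y in Q, f y ∂μ := lintegral_indicator (hmeas Q hQ) f
  rcases eq_or_ne (∫⁻ y in Q, f y ∂μ) 0 with hA0 | hA0
  · simp [dyadicMaximal_eq_zero (hA.trans hA0), ENNReal.zero_rpow_of_pos hδ0]
  rcases eq_or_ne (∫⁻ y in Q, f y ∂μ) ⊤ with hAtop | hAtop
  · simp [hAtop, hμ, ENNReal.top_rpow_of_pos hδ0, ENNReal.mul_top]
  have hweak (t : ℝ≥0∞) (ht : t ≠ 0) :
      μ.restrict Q {y | t < dyadicMaximal μ 𝒟 (Q.indicator f) y} ≤ (∫⁻ y in Q, f y ∂μ) / t :=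
    (Measure.restrict_apply_le _ _).trans
      (hA ▸ measure_lt_dyadicMaximal_le hcount hmeas hlam _ ht)
  simpa using inv_mul_lintegral_rpow_le_of_weak_bound (measurable_dyadicMaximal hcount hmeas _)
    hA0 hAtop (by simpa using hμ0) (by simpa using hμ) hweak hδ0 hδ1

theorem setLAverage_rpow_dyadicMaximal_le (hcount : 𝒟.Countable)
    (hmeas : ∀ Q ∈ 𝒟, MeasurableSet Q) (hlam : IsLaminar 𝒟) {f : α → ℝ≥0∞} (hf : Measurable f)
    {Q : Set α} (hQ : Q ∈ 𝒟) {x : α} (hx : x ∈ Q) {δ : ℝ} (hδ0 : 0 < δ) (hδ1 : δ < 1) :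
    (μ Q)⁻¹ * ∫⁻ y in Q, dyadicMaximal μ 𝒟 f y ^ δ ∂μ ≤
      6 * (ENNReal.ofReal (1 - δ))⁻¹ * dyadicMaximal μ 𝒟 f x ^ δ := by
  rcases eq_or_ne (μ Q) 0 with hμ0 | hμ0
  · simp [Measure.restrict_eq_zero.2 hμ0]
  rcases eq_or_ne (μ Q) ⊤ with hμ | hμ
  · simp [hμ]
  set K := (ENNReal.ofReal (1 - δ))⁻¹
  have hK : 1 ≤ K := ENNReal.one_le_inv.2 (ENNReal.ofReal_le_one.2 (by linarith))
  have hlocal (y : α) (hy : y ∈ Q) :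
      dyadicMaximal μ 𝒟 f y ^ δ ≤
        dyadicMaximal μ 𝒟 (Q.indicator f) y ^ δ + dyadicMaximal μ 𝒟 f x ^ δ := by
    have hsplit := dyadicMaximal_add_le (μ := μ) (𝒟 := 𝒟) (g' := Qᶜ.indicator f)
      (hf.indicator (hmeas Q hQ)) y
    rw [indicator_self_add_compl] at hsplit
    calc dyadicMaximal μ 𝒟 f y ^ δ
        ≤ (dyadicMaximal μ 𝒟 (Q.indicator f) y + dyadicMaximal μ 𝒟 f x) ^ δ := by
          gcongr
          exact hsplit.trans (add_le_add le_rfl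
            (dyadicMaximal_indicator_compl_le hlam hmeas f hQ hx hy))
      _ ≤ _ := ENNReal.rpow_add_le_add_rpow _ _ hδ0.le hδ1.le
  calc (μ Q)⁻¹ * ∫⁻ y in Q, dyadicMaximal μ 𝒟 f y ^ δ ∂μ
      ≤ (μ Q)⁻¹ * ∫⁻ y in Q, (dyadicMaximal μ 𝒟 (Q.indicator f) y ^ δ +
          dyadicMaximal μ 𝒟 f x ^ δ) ∂μ := by
        gcongr (μ Q)⁻¹ * ?_
        exact setLIntegral_mono' (hmeas Q hQ) hlocal
    _ = (μ Q)⁻¹ * ∫⁻ y in Q, dyadicMaximal μ 𝒟 (Q.indicator f) y ^ δ ∂μ +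
          dyadicMaximal μ 𝒟 f x ^ δ := by
        rw [lintegral_add_right _ measurable_const, setLIntegral_const, mul_add, mul_comm _ (μ Q),
          ← mul_assoc, ENNReal.inv_mul_cancel hμ0 hμ, one_mul]
    _ ≤ 5 * K * ((μ Q)⁻¹ * ∫⁻ y in Q, f y ∂μ) ^ δ + K * dyadicMaximal μ 𝒟 f x ^ δ :=
        add_le_add
          (setLAverage_rpow_dyadicMaximal_indicator_le hcount hmeas hlam f hQ hμ0 hμ hδ0 hδ1)
          (le_mul_of_one_le_left zero_le hK)
    _ ≤ 5 * K * dyadicMaximal μ 𝒟 f x ^ δ + K * dyadicMaximal μ 𝒟 f x ^ δ := by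
        gcongr
        exact setLAverage_le_dyadicMaximal hQ hx
    _ = 6 * K * dyadicMaximal μ 𝒟 f x ^ δ := by ring

theorem dyadicMaximal_rpow_dyadicMaximal_le (hcount : 𝒟.Countable)
    (hmeas : ∀ Q ∈ 𝒟, MeasurableSet Q) (hlam : IsLaminar 𝒟) {f : α → ℝ≥0∞} (hf : Measurable f)
    {δ : ℝ} (hδ0 : 0 < δ) (hδ1 : δ < 1) (x : α) :
    dyadicMaximal μ 𝒟 (fun y => dyadicMaximal μ 𝒟 f y ^ δ) x ≤
      6 * (ENNReal.ofReal (1 - δ))⁻¹ * dyadicMaximal μ 𝒟 f x ^ δ :=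
  dyadicMaximal_le_iff.2 fun _ hQ hx =>
    setLAverage_rpow_dyadicMaximal_le hcount hmeas hlam hf hQ hx hδ0 hδ1

end

theorem stmt_10_general {α : Type*} [MeasurableSpace α] (μ : Measure α)
    (𝒟 : Set (Set α)) (hcount : 𝒟.Countable)
    (hmeas : ∀ Q ∈ 𝒟, MeasurableSet Q)
    (hnest : ∀ Q ∈ 𝒟, ∀ Q' ∈ 𝒟, Disjoint Q Q' ∨ Q ⊆ Q' ∨ Q' ⊆ Q)
    (M : (α → ℝ≥0∞) → α → ℝ≥0∞)
    (hM : M = fun g x => ⨆ Q ∈ 𝒟, ⨆ (_ : x ∈ Q), (μ Q)⁻¹ * ∫⁻ y in Q, g y ∂μ) :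
    ∃ c : ℝ≥0∞, 0 < c ∧ c < ⊤ ∧
      ∀ (δ : ℝ), 0 < δ → δ < 1 →
        ∀ f : α → ℝ≥0∞, Measurable f → (∀ᵐ x ∂μ, M f x < ⊤) →
          ∀ᵐ x ∂μ, M (fun y => (M f y) ^ δ) x ≤
            c * (ENNReal.ofReal (1 - δ))⁻¹ * (M f x) ^ δ := by
  subst hM
  exact ⟨6, by norm_num, by norm_num, fun δ hδ0 hδ1 f hf _ => .of_forall
    (dyadicMaximal_rpow_dyadicMaximal_le hcount hmeas hnest hf hδ0 hδ1)⟩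

/-- Kolmogorov-type self-improvement: there is a constant `c`, depending only on the grid and
measure, such that for every `0 < δ < 1` and every `f` with `ℳf < ∞` a.e.,
`ℳ((ℳf)^δ) ≤ c (1−δ)⁻¹ (ℳf)^δ` a.e.; in particular `(ℳf)^δ ∈ A₁` with
`[(ℳf)^δ]_{A₁} ≤ c/(1−δ)`. -/
theorem stmt_10 {α : Type*} [MeasurableSpace α] (μ : Measure α)
    (𝒟 : Set (Set α)) (hcount : 𝒟.Countable)
    (hmeas : ∀ Q ∈ 𝒟, MeasurableSet Q)
    (hfin : ∀ Q ∈ 𝒟, 0 < μ Q ∧ μ Q < ⊤)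
    (hnest : ∀ Q ∈ 𝒟, ∀ Q' ∈ 𝒟, Disjoint Q Q' ∨ Q ⊆ Q' ∨ Q' ⊆ Q)
    (M : (α → ℝ≥0∞) → α → ℝ≥0∞)
    (hM : M = fun g x => ⨆ Q ∈ 𝒟, ⨆ (_ : x ∈ Q), (μ Q)⁻¹ * ∫⁻ y in Q, g y ∂μ) :
    ∃ c : ℝ≥0∞, 0 < c ∧ c < ⊤ ∧
      ∀ (δ : ℝ), 0 < δ → δ < 1 →
        ∀ f : α → ℝ≥0∞, Measurable f → (∀ᵐ x ∂μ, M f x < ⊤) →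
          ∀ᵐ x ∂μ, M (fun y => (M f y) ^ δ) x ≤
            c * (ENNReal.ofReal (1 - δ))⁻¹ * (M f x) ^ δ :=
  stmt_10_general μ 𝒟 hcount hmeas hnest M hM
end

section
/- Calderón–Zygmund lemma on a bounded space: let (X,d,μ) be a doubling quasimetric measure space with diam X < ∞, equipped with a dyadic system 𝒟* with parameters c₀, C₀, δ. Let f ∈ L¹, λ > 0, and Ω := {ℳf > λ}, where ℳ is the dyadic maximal operator over 𝒟*. If Ω ≠ X, then there is a pairwise disjoint collection of cubes 𝒫 ⊆ 𝒟* with Ω = ⋃_{P∈𝒫} P and, for every P ∈ 𝒫, λ < ⟨f⟩_{1,P} ≤ c λ, where c = C(2AC₀/(c₀δ))^ν depends only on the dyadic parameters, the doubling dimension ν, and the quasimetric constant A. -/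
/-!
The Calderón–Zygmund cubes are the maximal dyadic cubes whose average exceeds `λ`. Dyadic cubes
are nested or disjoint, so maximal ones are disjoint, and they cover `Ω`. They exist because
`X` is bounded: in all coarse generations the only cube is `X`, whose average is at most
`ℳf x₀ ≤ λ` for a point `x₀ ∉ Ω`.

The parent `Q` of a maximal cube `P` has average at most `λ`. By the quasi-triangle inequality
`Q` lies in the ball of radius `2AC₀δʲ` about the center of `P`, while `P` contains the ball of
radius `c₀δʲ⁺¹` about it. Doubling `⌈log₂ t⌉` times, for the ratio `t = 2AC₀/(c₀δ)` of the radii,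
gives `μ Q ≤ C tᵛ μ P`, hence `⟨f⟩_P ≤ C tᵛ ⟨f⟩_Q ≤ C tᵛ λ`.
-/

open MeasureTheory Set
open scoped ENNReal

namespace Real

lemma rpow_logb_comm {b x y : ℝ} (hx : 0 < x) (hy : 0 < y) : x ^ logb b y = y ^ logb b x := by
  rw [rpow_def_of_pos hx, rpow_def_of_pos hy, logb, logb]
  ring_nf

lemma le_two_pow_natCeil_logb {t : ℝ} (ht : 0 < t) : t ≤ 2 ^ ⌈logb 2 t⌉₊ := by
  rw [← rpow_natCast, ← logb_le_iff_le_rpow one_lt_two ht]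
  exact Nat.le_ceil _

lemma pow_natCeil_logb_two_le {C t : ℝ} (hC : 1 ≤ C) (ht : 1 ≤ t) :
    C ^ ⌈logb 2 t⌉₊ ≤ C * t ^ logb 2 C := by
  have hC0 : 0 < C := one_pos.trans_le hC
  calc C ^ ⌈logb 2 t⌉₊ = C ^ (⌈logb 2 t⌉₊ : ℝ) := (rpow_natCast C _).symm
    _ ≤ C ^ (logb 2 t + 1) :=
      rpow_le_rpow_of_exponent_le hC (Nat.ceil_lt_add_one (logb_nonneg one_lt_two ht)).le
    _ = C * t ^ logb 2 C := by
      rw [rpow_add hC0, rpow_one, rpow_logb_comm hC0 (one_pos.trans_le ht), mul_comm]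

end Real

section Doubling

variable {X : Type*} [MeasurableSpace X] {d : X → X → ℝ} {μ : Measure X} {C : ℝ}

lemma measure_ball_two_pow_mul_le
    (hdbl : ∀ x r, 0 < r → μ {y | d x y < 2 * r} ≤ ENNReal.ofReal C * μ {y | d x y < r})
    (z : X) {r : ℝ} (hr : 0 < r) (m : ℕ) :
    μ {y | d z y < 2 ^ m * r} ≤ ENNReal.ofReal C ^ m * μ {y | d z y < r} := by
  induction m with
  | zero => simp
  | succ m ih =>
    calc μ {y | d z y < 2 ^ (m + 1) * r} = μ {y | d z y < 2 * (2 ^ m * r)} := by ring_nf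
      _ ≤ ENNReal.ofReal C * μ {y | d z y < 2 ^ m * r} := hdbl z _ (by positivity)
      _ ≤ ENNReal.ofReal C * (ENNReal.ofReal C ^ m * μ {y | d z y < r}) := by gcongr
      _ = ENNReal.ofReal C ^ (m + 1) * μ {y | d z y < r} := by ring

lemma measure_ball_mul_le (hC : 1 ≤ C)
    (hdbl : ∀ x r, 0 < r → μ {y | d x y < 2 * r} ≤ ENNReal.ofReal C * μ {y | d x y < r})
    (z : X) {r t : ℝ} (hr : 0 < r) (ht : 1 ≤ t) :
    μ {y | d z y < t * r} ≤ ENNReal.ofReal (C * t ^ Real.logb 2 C) * μ {y | d z y < r} := by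
  have hball : {y | d z y < t * r} ⊆ {y | d z y < 2 ^ ⌈Real.logb 2 t⌉₊ * r} := fun y hy =>
    hy.trans_le <|
      mul_le_mul_of_nonneg_right (Real.le_two_pow_natCeil_logb (one_pos.trans_le ht)) hr.le
  calc μ {y | d z y < t * r} ≤ μ {y | d z y < 2 ^ ⌈Real.logb 2 t⌉₊ * r} := measure_mono hball
    _ ≤ ENNReal.ofReal C ^ ⌈Real.logb 2 t⌉₊ * μ {y | d z y < r} :=
      measure_ball_two_pow_mul_le hdbl z hr _
    _ ≤ ENNReal.ofReal (C * t ^ Real.logb 2 C) * μ {y | d z y < r} := by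
      rw [← ENNReal.ofReal_pow (zero_le_one.trans hC)]
      gcongr
      exact Real.pow_natCeil_logb_two_le hC ht

end Doubling

lemma subset_ball_of_subset_ball {X : Type*} {d : X → X → ℝ} {A R : ℝ} (hA : 0 < A)
    (hd_symm : ∀ x y, d x y = d y x) (hd_tri : ∀ x y z, d x y ≤ A * (d x z + d z y))
    {Q : Set X} {z z' : X} (hQ : Q ⊆ {y | d z' y < R}) (hz : d z' z < R) :
    Q ⊆ {y | d z y < 2 * A * R} := fun y hy => calc
  d z y ≤ A * (d z' z + d z' y) := hd_symm z z' ▸ hd_tri z y z'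
  _ < A * (R + R) := by gcongr; exact hQ hy
  _ = 2 * A * R := by ring

lemma setLAverage_le_mul_of_subset {X : Type*} [MeasurableSpace X] {μ : Measure X}
    {f : X → ℝ≥0∞} {P Q : Set X} {c : ℝ≥0∞} (hPQ : P ⊆ Q) (hμQ : μ Q ≠ ∞)
    (hμ : μ Q ≤ c * μ P) (hμP₀ : μ P ≠ 0) (hμP : μ P ≠ ∞) :
    ⨍⁻ x in P, f x ∂μ ≤ c * ⨍⁻ x in Q, f x ∂μ := by
  calc ⨍⁻ x in P, f x ∂μ = (∫⁻ x in P, f x ∂μ) / μ P := setLAverage_eq μ f P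
    _ ≤ (μ Q * ⨍⁻ x in Q, f x ∂μ) / μ P := by
      rw [measure_mul_setLAverage f hμQ]; gcongr
    _ ≤ (c * μ P * ⨍⁻ x in Q, f x ∂μ) / μ P := by gcongr
    _ = c * ⨍⁻ x in Q, f x ∂μ := by
      rw [mul_right_comm, ENNReal.mul_div_cancel_right hμP₀ hμP]

namespace Dyadic

section Combinatorics

variable {X : Type*} {𝒟 : ℤ → Set (Set X)}

lemma disjoint_or_subset_or_subset_of_mem
    (hnested : ∀ k l : ℤ, k ≤ l → ∀ Q ∈ 𝒟 l, ∀ Q' ∈ 𝒟 k, Disjoint Q Q' ∨ Q ⊆ Q')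
    {k l : ℤ} {Q Q' : Set X} (hQ : Q ∈ 𝒟 k) (hQ' : Q' ∈ 𝒟 l) :
    Disjoint Q Q' ∨ Q ⊆ Q' ∨ Q' ⊆ Q := by
  rcases le_total k l with hkl | hlk
  · exact (hnested k l hkl Q' hQ' Q hQ).imp (fun h => h.symm) Or.inr
  · exact (hnested l k hlk Q hQ Q' hQ').imp id Or.inl

lemma pairwise_disjoint_setOf_maximal {𝒮 : Set (Set X)}
    (h : ∀ Q ∈ 𝒮, ∀ Q' ∈ 𝒮, Disjoint Q Q' ∨ Q ⊆ Q' ∨ Q' ⊆ Q) :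
    {P | Maximal (· ∈ 𝒮) P}.Pairwise Disjoint := by
  intro P hP P' hP' hne
  rcases h P hP.prop P' hP'.prop with hdisj | hsub | hsub
  · exact hdisj
  · exact absurd (hP.eq_of_subset hP'.prop hsub) hne
  · exact absurd (hP'.eq_of_subset hP.prop hsub).symm hne

lemma exists_maximal_superset
    (hnested : ∀ k l : ℤ, k ≤ l → ∀ Q ∈ 𝒟 l, ∀ Q' ∈ 𝒟 k, Disjoint Q Q' ∨ Q ⊆ Q')
    (hne : ∀ k, ∀ Q ∈ 𝒟 k, Q.Nonempty) {p : Set X → Prop}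
    (hbdd : ∃ k₁, ∀ j, ∀ Q ∈ 𝒟 j, p Q → k₁ ≤ j) {k : ℤ} {Q : Set X} (hQ : Q ∈ 𝒟 k)
    (hpQ : p Q) : ∃ P, Maximal (fun R => (∃ k, R ∈ 𝒟 k) ∧ p R) P ∧ Q ⊆ P := by
  obtain ⟨k₁, hk₁⟩ := hbdd
  obtain ⟨m, ⟨R, hRm, hQR, hpR⟩, hmin⟩ := Int.exists_least_of_bdd
    (P := fun j => ∃ R ∈ 𝒟 j, Q ⊆ R ∧ p R)
    ⟨k₁, fun j ⟨R, hR, _, hpR⟩ => hk₁ j R hR hpR⟩ ⟨k, Q, hQ, subset_rfl, hpQ⟩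
  refine ⟨R, ⟨⟨⟨m, hRm⟩, hpR⟩, ?_⟩, hQR⟩
  rintro R' ⟨⟨k', hR'k'⟩, hpR'⟩ hRR'
  obtain ⟨x, hx⟩ := hne m R hRm
  exact (hnested m k' (hmin k' ⟨R', hR'k', hQR.trans hRR', hpR'⟩) R' hR'k' R hRm).resolve_left
    (not_disjoint_iff.2 ⟨x, hRR' hx, hx⟩)

lemma univ_mem_of_forall_le_eq_univ [Nonempty X] (hcover : ∀ k, ⋃₀ 𝒟 k = univ) {k₁ : ℤ}
    (hcoarse : ∀ j ≤ k₁, ∀ Q ∈ 𝒟 j, Q = univ) : univ ∈ 𝒟 k₁ := by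
  obtain ⟨Q, hQ, -⟩ := (hcover k₁).symm ▸ mem_univ (Classical.arbitrary X)
  exact hcoarse k₁ le_rfl Q hQ ▸ hQ

lemma exists_parent (hcover : ∀ k, ⋃₀ 𝒟 k = univ) (hdisj : ∀ k, (𝒟 k).Pairwise Disjoint)
    (hnested : ∀ k l : ℤ, k ≤ l → ∀ Q ∈ 𝒟 l, ∀ Q' ∈ 𝒟 k, Disjoint Q Q' ∨ Q ⊆ Q')
    {k₁ : ℤ} (hcoarse : ∀ j ≤ k₁, ∀ Q ∈ 𝒟 j, Q = univ) {k : ℤ} {P : Set X} (hP : P ∈ 𝒟 k)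
    (hPne : P.Nonempty) (hPuniv : P ≠ univ) : ∃ j, ∃ Q ∈ 𝒟 j, P ∈ 𝒟 (j + 1) ∧ P ⊂ Q := by
  obtain ⟨x, hx⟩ := hPne
  have : Nonempty X := ⟨x⟩
  have hk₁ : k₁ ≤ k := (lt_of_not_ge fun h => hPuniv (hcoarse k h P hP)).le
  obtain ⟨j, ⟨hjk, Q, hQ, hxQ, hQP⟩, hgreatest⟩ := Int.exists_greatest_of_bdd
    (P := fun j => j ≤ k ∧ ∃ Q ∈ 𝒟 j, x ∈ Q ∧ Q ≠ P) ⟨k, fun j h => h.1⟩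
    ⟨k₁, hk₁, univ, univ_mem_of_forall_le_eq_univ hcover hcoarse, mem_univ x, hPuniv.symm⟩
  have hjk : j < k := hjk.lt_of_ne <| by
    rintro rfl
    exact disjoint_left.1 (hdisj j hQ hP hQP) hxQ hx
  have hPj : P ∈ 𝒟 (j + 1) := by
    obtain ⟨Q', hQ', hxQ'⟩ := (hcover (j + 1)).symm ▸ mem_univ x
    by_contra hPj
    have hQ'P : Q' ≠ P := fun h => hPj (h ▸ hQ')
    exact absurd (hgreatest (j + 1) ⟨by omega, Q', hQ', hxQ', hQ'P⟩) (by omega)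
  have hPQ : P ⊆ Q := (hnested j (j + 1) (by omega) P hPj Q hQ).resolve_left
    (not_disjoint_iff.2 ⟨x, hx, hxQ⟩)
  exact ⟨j, Q, hQ, hPj, hPQ.ssubset_of_ne hQP.symm⟩

lemma exists_maximal_decomposition (hcover : ∀ k, ⋃₀ 𝒟 k = univ)
    (hdisj : ∀ k, (𝒟 k).Pairwise Disjoint)
    (hnested : ∀ k l : ℤ, k ≤ l → ∀ Q ∈ 𝒟 l, ∀ Q' ∈ 𝒟 k, Disjoint Q Q' ∨ Q ⊆ Q')
    (hne : ∀ k, ∀ Q ∈ 𝒟 k, Q.Nonempty) {k₁ : ℤ} (hcoarse : ∀ j ≤ k₁, ∀ Q ∈ 𝒟 j, Q = univ)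
    {p : Set X → Prop} (hp : ¬ p univ) :
    ∃ 𝔓 : Set (Set X), (∀ P ∈ 𝔓, ∃ k, P ∈ 𝒟 k) ∧ 𝔓.Pairwise Disjoint ∧
      ⋃₀ 𝔓 = {x | ∃ k, ∃ Q ∈ 𝒟 k, x ∈ Q ∧ p Q} ∧
      ∀ P ∈ 𝔓, p P ∧ ∃ j, ∃ Q ∈ 𝒟 j, P ∈ 𝒟 (j + 1) ∧ P ⊂ Q ∧ ¬ p Q := by
  let 𝒮 : Set (Set X) := {R | (∃ k, R ∈ 𝒟 k) ∧ p R}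
  have hbdd : ∃ k₁, ∀ j, ∀ Q ∈ 𝒟 j, p Q → k₁ ≤ j :=
    ⟨k₁, fun j Q hQ hpQ => (lt_of_not_ge fun h => hp (hcoarse j h Q hQ ▸ hpQ)).le⟩
  refine ⟨{P | Maximal (· ∈ 𝒮) P}, fun P (hP : Maximal (· ∈ 𝒮) P) => hP.prop.1,
    pairwise_disjoint_setOf_maximal ?_, ?_, fun P (hP : Maximal (· ∈ 𝒮) P) => ⟨hP.prop.2, ?_⟩⟩
  · rintro Q ⟨⟨k, hQ⟩, -⟩ Q' ⟨⟨k', hQ'⟩, -⟩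
    exact disjoint_or_subset_or_subset_of_mem hnested hQ hQ'
  · ext x
    constructor
    · rintro ⟨P, ⟨⟨⟨k, hPk⟩, hpP⟩, -⟩, hxP⟩
      exact ⟨k, P, hPk, hxP, hpP⟩
    · rintro ⟨k, Q, hQ, hxQ, hpQ⟩
      obtain ⟨P, hP, hQP⟩ := exists_maximal_superset hnested hne hbdd hQ hpQ
      exact ⟨P, hP, hQP hxQ⟩
  obtain ⟨⟨k, hPk⟩, hpP⟩ := hP.prop
  obtain ⟨j, Q, hQ, hPj, hPQ⟩ :=
    exists_parent hcover hdisj hnested hcoarse hPk (hne k P hPk) fun h => hp (h ▸ hpP)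
  exact ⟨j, Q, hQ, hPj, hPQ, fun hpQ => hP.not_prop_of_ssuperset hPQ ⟨⟨j, hQ⟩, hpQ⟩⟩

end Combinatorics

section Geometry

variable {X : Type*} {d : X → X → ℝ} {c₀ C₀ δ : ℝ} {𝒟 : ℤ → Set (Set X)}

lemma exists_forall_le_eq_univ {Dm : ℝ} (hDm : ∀ x y, d x y ≤ Dm) (hc₀ : 0 < c₀) (hδ0 : 0 < δ)
    (hδ1 : δ < 1)
    (hcenter : ∀ k, ∀ Q ∈ 𝒟 k, ∃ z, {y | d z y < c₀ * δ ^ k} ⊆ Q ∧ Q ⊆ {y | d z y < C₀ * δ ^ k}) :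
    ∃ k₁ : ℤ, ∀ j ≤ k₁, ∀ Q ∈ 𝒟 j, Q = univ := by
  obtain ⟨n, hn⟩ := pow_unbounded_of_one_lt (Dm / c₀) ((one_lt_inv₀ hδ0).2 hδ1)
  refine ⟨-n, fun j hj Q hQ => ?_⟩
  obtain ⟨z, hz, -⟩ := hcenter j Q hQ
  refine eq_univ_of_forall fun y => hz ?_
  calc d z y ≤ Dm := hDm z y
    _ < c₀ * δ ^ (-(n : ℤ)) := by
      rw [zpow_neg, zpow_natCast, ← inv_pow]; exact (div_lt_iff₀' hc₀).1 hn
    _ ≤ c₀ * δ ^ j :=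
      mul_le_mul_of_nonneg_left (zpow_le_zpow_right_of_le_one₀ hδ0 hδ1.le hj) hc₀.le

lemma nonempty_of_mem (hd_self : ∀ x, d x x = 0) (hc₀ : 0 < c₀) (hδ0 : 0 < δ)
    (hcenter : ∀ k, ∀ Q ∈ 𝒟 k, ∃ z, {y | d z y < c₀ * δ ^ k} ⊆ Q ∧ Q ⊆ {y | d z y < C₀ * δ ^ k})
    {k : ℤ} {Q : Set X} (hQ : Q ∈ 𝒟 k) : Q.Nonempty := by
  obtain ⟨z, hz, -⟩ := hcenter k Q hQ
  exact ⟨z, hz (by simp only [mem_ofPred_eq, hd_self]; positivity)⟩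

variable [MeasurableSpace X] {μ : Measure X}

lemma measure_ne_zero_of_mem (hpos : ∀ x r, 0 < r → 0 < μ {y | d x y < r}) (hc₀ : 0 < c₀)
    (hδ0 : 0 < δ)
    (hcenter : ∀ k, ∀ Q ∈ 𝒟 k, ∃ z, {y | d z y < c₀ * δ ^ k} ⊆ Q ∧ Q ⊆ {y | d z y < C₀ * δ ^ k})
    {k : ℤ} {Q : Set X} (hQ : Q ∈ 𝒟 k) : μ Q ≠ 0 := by
  obtain ⟨z, hz, -⟩ := hcenter k Q hQ
  exact ((hpos z _ (by positivity)).trans_le (measure_mono hz)).ne'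

lemma measure_ne_top_of_mem (hfin : ∀ x r, 0 < r → μ {y | d x y < r} < ⊤) (hC₀ : 0 < C₀)
    (hδ0 : 0 < δ)
    (hcenter : ∀ k, ∀ Q ∈ 𝒟 k, ∃ z, {y | d z y < c₀ * δ ^ k} ⊆ Q ∧ Q ⊆ {y | d z y < C₀ * δ ^ k})
    {k : ℤ} {Q : Set X} (hQ : Q ∈ 𝒟 k) : μ Q ≠ ∞ := by
  obtain ⟨z, -, hz⟩ := hcenter k Q hQ
  exact ((measure_mono hz).trans_lt (hfin z _ (by positivity))).ne

lemma measure_le_of_subset_of_mem_succ {A C : ℝ} (hA : 1 ≤ A) (hd_symm : ∀ x y, d x y = d y x)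
    (hd_self : ∀ x, d x x = 0) (hd_tri : ∀ x y z, d x y ≤ A * (d x z + d z y)) (hC : 1 ≤ C)
    (hdbl : ∀ x r, 0 < r → μ {y | d x y < 2 * r} ≤ ENNReal.ofReal C * μ {y | d x y < r})
    (hc₀ : 0 < c₀) (hC₀ : c₀ ≤ C₀) (hδ0 : 0 < δ) (hδ1 : δ < 1)
    (hcenter : ∀ k, ∀ Q ∈ 𝒟 k, ∃ z, {y | d z y < c₀ * δ ^ k} ⊆ Q ∧ Q ⊆ {y | d z y < C₀ * δ ^ k})
    {j : ℤ} {P Q : Set X} (hP : P ∈ 𝒟 (j + 1)) (hQ : Q ∈ 𝒟 j) (hPQ : P ⊆ Q) :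
    μ Q ≤ ENNReal.ofReal (C * (2 * A * C₀ / (c₀ * δ)) ^ Real.logb 2 C) * μ P := by
  obtain ⟨z, hzP, -⟩ := hcenter (j + 1) P hP
  obtain ⟨z', -, hQz'⟩ := hcenter j Q hQ
  set r := c₀ * δ ^ (j + 1)
  set t := 2 * A * C₀ / (c₀ * δ)
  have hr : 0 < r := by positivity
  have hz : z ∈ P := hzP (by simpa only [mem_ofPred_eq, hd_self] using hr)
  have htr : t * r = 2 * A * (C₀ * δ ^ j) := by
    simp only [t, r, zpow_add_one₀ hδ0.ne']
    field_simp
  have hQz : Q ⊆ {y | d z y < t * r} := htr ▸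
    subset_ball_of_subset_ball (by linarith) hd_symm hd_tri hQz' (hQz' (hPQ hz))
  have ht : 1 ≤ t := by
    rw [one_le_div (by positivity)]
    nlinarith [mul_le_mul_of_nonneg_left hδ1.le hc₀.le]
  calc μ Q ≤ μ {y | d z y < t * r} := measure_mono hQz
    _ ≤ ENNReal.ofReal (C * t ^ Real.logb 2 C) * μ {y | d z y < r} :=
      measure_ball_mul_le hC hdbl z hr ht
    _ ≤ ENNReal.ofReal (C * t ^ Real.logb 2 C) * μ P := by gcongr

end Geometry

end Dyadic

theorem stmt_12_general {X : Type*} [MeasurableSpace X]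
    (d : X → X → ℝ) (A : ℝ) (hA : 1 ≤ A)
    (hd_symm : ∀ x y, d x y = d y x) (hd_self : ∀ x, d x x = 0)
    (hd_tri : ∀ x y z, d x y ≤ A * (d x z + d z y))
    (μ : Measure X) (C : ℝ) (hC : 1 ≤ C)
    (hball : ∀ x r, 0 < r → 0 < μ {y | d x y < r} ∧ μ {y | d x y < r} < ⊤)
    (hdbl : ∀ x r, 0 < r → μ {y | d x y < 2 * r} ≤ ENNReal.ofReal C * μ {y | d x y < r})
    (ν : ℝ) (hν : ν = Real.logb 2 C)
    -- `X` is bounded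
    (Dm : ℝ) (hDm : ∀ x y, d x y ≤ Dm)
    -- dyadic system with parameters `c₀, C₀, δ`
    (c₀ C₀ δ : ℝ) (hc₀ : 0 < c₀) (hC₀ : c₀ ≤ C₀) (hδ0 : 0 < δ) (hδ1 : δ < 1)
    (𝒟 : ℤ → Set (Set X))
    (hcover : ∀ k, ⋃₀ 𝒟 k = Set.univ)
    (hdisj : ∀ k, (𝒟 k).Pairwise Disjoint)
    (hnested : ∀ k l : ℤ, k ≤ l → ∀ Q ∈ 𝒟 l, ∀ Q' ∈ 𝒟 k, Disjoint Q Q' ∨ Q ⊆ Q')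
    (hcenter : ∀ k, ∀ Q ∈ 𝒟 k, ∃ z,
      {y | d z y < c₀ * δ ^ k} ⊆ Q ∧ Q ⊆ {y | d z y < C₀ * δ ^ k})
    -- the function, the level and the dyadic maximal operator
    (f : X → ℝ≥0∞)
    (lam : ℝ≥0∞)
    (M : X → ℝ≥0∞)
    (hM : M = fun x => ⨆ k, ⨆ Q ∈ 𝒟 k, ⨆ (_ : x ∈ Q), (μ Q)⁻¹ * ∫⁻ y in Q, f y ∂μ)
    (hΩ : {x | lam < M x} ≠ Set.univ) :
    ∃ 𝔓 : Set (Set X), (∀ P ∈ 𝔓, ∃ k, P ∈ 𝒟 k) ∧ 𝔓.Pairwise Disjoint ∧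
      ⋃₀ 𝔓 = {x | lam < M x} ∧
      ∀ P ∈ 𝔓, lam < (μ P)⁻¹ * ∫⁻ y in P, f y ∂μ ∧
        (μ P)⁻¹ * ∫⁻ y in P, f y ∂μ ≤
          ENNReal.ofReal (C * (2 * A * C₀ / (c₀ * δ)) ^ ν) * lam := by
  subst hν hM
  simp only [← ENNReal.div_eq_inv_mul, ← setLAverage_eq] at hΩ ⊢
  obtain ⟨x₀, hx₀⟩ := (ne_univ_iff_exists_notMem _).1 hΩ
  have : Nonempty X := ⟨x₀⟩
  obtain ⟨k₁, hcoarse⟩ := Dyadic.exists_forall_le_eq_univ hDm hc₀ hδ0 hδ1 hcenter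
  have hne (k : ℤ) (Q : Set X) (hQ : Q ∈ 𝒟 k) : Q.Nonempty :=
    Dyadic.nonempty_of_mem hd_self hc₀ hδ0 hcenter hQ
  have hlam_univ : ¬ lam < ⨍⁻ y in univ, f y ∂μ := fun h => hx₀ <| h.trans_le <|
    le_iSup₂_of_le k₁ univ <| le_iSup₂_of_le
      (Dyadic.univ_mem_of_forall_le_eq_univ hcover hcoarse) (mem_univ x₀) le_rfl
  obtain ⟨𝔓, h𝔓, h𝔓disj, h𝔓cover, h𝔓stop⟩ :=
    Dyadic.exists_maximal_decomposition hcover hdisj hnested hne hcoarse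
      (p := fun Q => lam < ⨍⁻ y in Q, f y ∂μ) hlam_univ
  refine ⟨𝔓, h𝔓, h𝔓disj, by simp only [h𝔓cover, lt_iSup_iff, exists_prop], fun P hP => ?_⟩
  obtain ⟨hlt, j, Q, hQ, hPj, hPQ, hQavg⟩ := h𝔓stop P hP
  have hC₀0 : 0 < C₀ := hc₀.trans_le hC₀
  have hfin (x : X) (r : ℝ) (hr : 0 < r) := (hball x r hr).2
  refine ⟨hlt, ?_⟩
  calc ⨍⁻ y in P, f y ∂μ
      ≤ ENNReal.ofReal (C * (2 * A * C₀ / (c₀ * δ)) ^ Real.logb 2 C) * ⨍⁻ y in Q, f y ∂μ :=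
        setLAverage_le_mul_of_subset hPQ.subset
          (Dyadic.measure_ne_top_of_mem hfin hC₀0 hδ0 hcenter hQ)
          (Dyadic.measure_le_of_subset_of_mem_succ hA hd_symm hd_self hd_tri hC hdbl hc₀ hC₀
            hδ0 hδ1 hcenter hPj hQ hPQ.subset)
          (Dyadic.measure_ne_zero_of_mem (fun x r hr => (hball x r hr).1) hc₀ hδ0 hcenter hPj)
          (Dyadic.measure_ne_top_of_mem hfin hC₀0 hδ0 hcenter hPj)
    _ ≤ _ := by gcongr; exact not_lt.1 hQavg

/-- Calderón–Zygmund lemma on a bounded doubling quasimetric measure space with a dyadic system: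
if `Ω = {ℳf > λ} ≠ X`, there is a pairwise disjoint family `𝔓` of dyadic cubes with
`Ω = ⋃ 𝔓` and `λ < ⟨f⟩_{1,P} ≤ C (2AC₀/(c₀δ))^ν λ` for every `P ∈ 𝔓`. -/
theorem stmt_12 {X : Type*} [MeasurableSpace X]
    (d : X → X → ℝ) (A : ℝ) (hA : 1 ≤ A)
    (hd_symm : ∀ x y, d x y = d y x) (hd_self : ∀ x, d x x = 0)
    (hd_nonneg : ∀ x y, 0 ≤ d x y)
    (hd_tri : ∀ x y z, d x y ≤ A * (d x z + d z y))
    (μ : Measure X) (C : ℝ) (hC : 1 ≤ C)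
    (hball : ∀ x r, 0 < r → 0 < μ {y | d x y < r} ∧ μ {y | d x y < r} < ⊤)
    (hdbl : ∀ x r, 0 < r → μ {y | d x y < 2 * r} ≤ ENNReal.ofReal C * μ {y | d x y < r})
    (ν : ℝ) (hν : ν = Real.logb 2 C)
    -- `X` is bounded
    (Dm : ℝ) (hDm : ∀ x y, d x y ≤ Dm)
    -- dyadic system with parameters `c₀, C₀, δ`
    (c₀ C₀ δ : ℝ) (hc₀ : 0 < c₀) (hC₀ : c₀ ≤ C₀) (hδ0 : 0 < δ) (hδ1 : δ < 1)
    (𝒟 : ℤ → Set (Set X))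
    (hmeas : ∀ k, ∀ Q ∈ 𝒟 k, MeasurableSet Q)
    (hcover : ∀ k, ⋃₀ 𝒟 k = Set.univ)
    (hdisj : ∀ k, (𝒟 k).Pairwise Disjoint)
    (hnested : ∀ k l : ℤ, k ≤ l → ∀ Q ∈ 𝒟 l, ∀ Q' ∈ 𝒟 k, Disjoint Q Q' ∨ Q ⊆ Q')
    (hcenter : ∀ k, ∀ Q ∈ 𝒟 k, ∃ z,
      {y | d z y < c₀ * δ ^ k} ⊆ Q ∧ Q ⊆ {y | d z y < C₀ * δ ^ k})
    -- the function, the level and the dyadic maximal operator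
    (f : X → ℝ≥0∞) (hf : Measurable f) (hfL1 : ∫⁻ x, f x ∂μ < ⊤)
    (lam : ℝ≥0∞) (hlam0 : 0 < lam) (hlamfin : lam < ⊤)
    (M : X → ℝ≥0∞)
    (hM : M = fun x => ⨆ k, ⨆ Q ∈ 𝒟 k, ⨆ (_ : x ∈ Q), (μ Q)⁻¹ * ∫⁻ y in Q, f y ∂μ)
    (hΩ : {x | lam < M x} ≠ Set.univ) :
    ∃ 𝔓 : Set (Set X), (∀ P ∈ 𝔓, ∃ k, P ∈ 𝒟 k) ∧ 𝔓.Pairwise Disjoint ∧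
      ⋃₀ 𝔓 = {x | lam < M x} ∧
      ∀ P ∈ 𝔓, lam < (μ P)⁻¹ * ∫⁻ y in P, f y ∂μ ∧
        (μ P)⁻¹ * ∫⁻ y in P, f y ∂μ ≤
          ENNReal.ofReal (C * (2 * A * C₀ / (c₀ * δ)) ^ ν) * lam :=
  stmt_12_general d A hA hd_symm hd_self hd_tri μ C hC hball hdbl ν hν Dm hDm c₀ C₀ δ hc₀ hC₀ hδ0
    hδ1 𝒟 hcover hdisj hnested hcenter f lam M hM hΩ
end

section
/- Whitney decomposition with dyadic cubes: let (X,d,μ) be a doubling quasimetric measure space with quasimetric constant A, satisfying diam B(x;r) ≥ γr for all x,r, equipped with a dyadic system 𝒟* with parameters c₀, C₀, δ. Then for every open set Ω ⊊ X there is a pairwise disjoint collection 𝒫 ⊆ 𝒟* with Ω = ⋃_{P∈𝒫} P and diam P ≤ d(P, Ωᶜ) ≤ (4A²C₀/(γc₀δ)) diam P for every P ∈ 𝒫. -/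
open MeasureTheory
open scoped ENNReal

/-! Call a dyadic cube good if its diameter is at most its distance to `Ωᶜ`. Good cubes have
positive diameter, so they lie in `Ω`; cubes of small enough size around a point of `Ω` are good;
and a good cube containing `x` has diameter at most `d(x, Ωᶜ)`, which bounds its level from below.
So every point of `Ω` lies in a good cube of least level, and these maximal good cubes are pairwise
disjoint by nestedness. The parent of a maximal good cube `P` of level `k` is not good, which puts
`Ωᶜ` within `4A²C₀δ^(k-1) ≤ (4A²C₀/(γc₀δ)) diam P` of the center of `P`. -/

section Whitney

variable {X : Type*}

structure IsQuasimetric (d : X → X → ℝ) (A : ℝ) : Prop where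
  one_le : 1 ≤ A
  symm : ∀ x y, d x y = d y x
  self : ∀ x, d x x = 0
  nonneg : ∀ x y, 0 ≤ d x y
  triangle : ∀ x y z, d x y ≤ A * (d x z + d z y)

noncomputable def setEDiam (d : X → X → ℝ) (S : Set X) : ℝ≥0∞ :=
  ⨆ y ∈ S, ⨆ z ∈ S, ENNReal.ofReal (d y z)

noncomputable def setEDist (d : X → X → ℝ) (S T : Set X) : ℝ≥0∞ :=
  ⨅ y ∈ S, ⨅ z ∈ T, ENNReal.ofReal (d y z)

section SetDistances

variable {d : X → X → ℝ} {S T : Set X}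

theorem setEDiam_mono (h : S ⊆ T) : setEDiam d S ≤ setEDiam d T :=
  iSup₂_le fun y hy => iSup₂_le fun z hz =>
    le_iSup₂_of_le y (h hy) (le_iSup₂_of_le z (h hz) le_rfl)

theorem ofReal_mul_le_setEDiam {γ r : ℝ} {z : X} (hdiam : ∀ x r, 0 < r →
      ENNReal.ofReal (γ * r) ≤ setEDiam d {y | d x y < r})
    (hr : 0 < r) (h : {y | d z y < r} ⊆ S) : ENNReal.ofReal (γ * r) ≤ setEDiam d S :=
  (hdiam z r hr).trans (setEDiam_mono h)

theorem setEDist_le {y z : X} (hy : y ∈ S) (hz : z ∈ T) :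
    setEDist d S T ≤ ENNReal.ofReal (d y z) :=
  (iInf₂_le y hy).trans (iInf₂_le z hz)

theorem exists_lt_of_setEDist_lt {r : ℝ} (h : setEDist d S T < ENNReal.ofReal r) :
    ∃ y ∈ S, ∃ z ∈ T, d y z < r := by
  simp only [setEDist, iInf_lt_iff] at h
  obtain ⟨y, hy, z, hz, hlt⟩ := h
  exact ⟨y, hy, z, hz, (ENNReal.ofReal_lt_ofReal_iff'.mp hlt).1⟩

end SetDistances

theorem exists_forall_le_of_mul_zpow_le {a δ : ℝ} (M : ℝ) (ha : 0 < a) (hδ0 : 0 < δ)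
    (hδ1 : δ < 1) : ∃ b : ℤ, ∀ k : ℤ, a * δ ^ k ≤ M → b ≤ k := by
  obtain ⟨n, hn⟩ := exists_pow_lt_of_lt_one (show 0 < a / (|M| + 1) by positivity) hδ1
  refine ⟨-n, fun k hk => not_lt.mp fun hkn => ?_⟩
  have hone : 1 ≤ δ ^ k * δ ^ n := by
    rw [← zpow_natCast, ← zpow_add₀ hδ0.ne']
    exact one_le_zpow_of_nonpos₀ hδ0 hδ1.le (by omega)
  have hn' : δ ^ n * (|M| + 1) < a := (lt_div_iff₀ (by positivity)).mp hn
  nlinarith [le_abs_self M, pow_pos hδ0 n, mul_le_mul_of_nonneg_right hk (pow_pos hδ0 n).le]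

namespace IsQuasimetric

variable {d : X → X → ℝ} {A : ℝ} {S S' T Ω : Set X} {x y w z z' : X} {r R : ℝ}

theorem pos (hd : IsQuasimetric d A) : 0 < A :=
  zero_lt_one.trans_le hd.one_le

theorem le_of_mem_ball (hd : IsQuasimetric d A) (hy : y ∈ {u | d z u < R})
    (hw : w ∈ {u | d z u < R}) : d y w ≤ 2 * A * R := by
  calc d y w ≤ A * (d z y + d z w) := by simpa only [hd.symm y z] using hd.triangle y w z
    _ ≤ A * (R + R) := mul_le_mul_of_nonneg_left (add_le_add hy.le hw.le) hd.pos.le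
    _ = 2 * A * R := by ring

theorem setEDiam_le_of_subset_ball (hd : IsQuasimetric d A) (hS : S ⊆ {y | d z y < R}) :
    setEDiam d S ≤ ENNReal.ofReal (2 * A * R) :=
  iSup₂_le fun _ hy => iSup₂_le fun _ hw =>
    ENNReal.ofReal_le_ofReal (hd.le_of_mem_ball (hS hy) (hS hw))

theorem subset_of_setEDiam_le_setEDist (hd : IsQuasimetric d A) (hpos : 0 < setEDiam d S)
    (h : setEDiam d S ≤ setEDist d S Ωᶜ) : S ⊆ Ω := by
  intro p hp
  by_contra hpΩ
  have : setEDist d S Ωᶜ ≤ 0 := by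
    simpa [hd.self] using setEDist_le (d := d) hp (show p ∈ Ωᶜ from hpΩ)
  exact hpos.not_ge (h.trans this)

theorem setEDiam_le_setEDist_of_subset_ball (hd : IsQuasimetric d A) (hx : x ∈ S)
    (hS : S ⊆ {y | d z y < R}) (hΩ : {y | d x y < r} ⊆ Ω) (hR : 4 * A ^ 2 * R ≤ r) :
    setEDiam d S ≤ setEDist d S Ωᶜ := by
  refine (hd.setEDiam_le_of_subset_ball hS).trans
    (le_iInf₂ fun y hy => le_iInf₂ fun w hw => ENNReal.ofReal_le_ofReal ?_)
  have hxy := hd.le_of_mem_ball (hS hx) (hS hy)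
  have hxw : r ≤ d x w := not_lt.mp fun h => hw (hΩ h)
  have := hd.triangle x w y
  nlinarith [hd.pos, mul_le_mul_of_nonneg_left hxy hd.pos.le]

theorem setEDist_le_of_not_setEDiam_le (hd : IsQuasimetric d A) (hz : z ∈ S) (hSS' : S ⊆ S')
    (hS' : S' ⊆ {y | d z' y < R}) (h : ¬ setEDiam d S' ≤ setEDist d S' T) :
    setEDist d S T ≤ ENNReal.ofReal (4 * A ^ 2 * R) := by
  obtain ⟨y, hy, w, hw, hyw⟩ :=
    exists_lt_of_setEDist_lt ((not_le.mp h).trans_le (hd.setEDiam_le_of_subset_ball hS'))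
  have hzy := hd.le_of_mem_ball (hS' (hSS' hz)) (hS' hy)
  have hA := hd.pos
  refine (setEDist_le hz hw).trans (ENNReal.ofReal_le_ofReal ?_)
  calc d z w ≤ A * (d z y + d y w) := hd.triangle z w y
    _ ≤ A * (2 * A * R + 2 * A * R) := by gcongr
    _ = 4 * A ^ 2 * R := by ring

variable {𝒟 : ℤ → Set (Set X)} {δ : ℝ}

theorem exists_cube_setEDiam_le_setEDist (hd : IsQuasimetric d A) {C₀ : ℝ} (hC₀ : 0 < C₀)
    (hδ1 : δ < 1) (hcover : ∀ k, ⋃₀ 𝒟 k = Set.univ)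
    (hball : ∀ k, ∀ Q ∈ 𝒟 k, ∃ z, Q ⊆ {y | d z y < C₀ * δ ^ k})
    (hr : 0 < r) (hΩ : {y | d x y < r} ⊆ Ω) :
    ∃ k, ∃ Q ∈ 𝒟 k, x ∈ Q ∧ setEDiam d Q ≤ setEDist d Q Ωᶜ := by
  have hA := hd.pos
  obtain ⟨n, hn⟩ := exists_pow_lt_of_lt_one (show 0 < r / (4 * A ^ 2 * C₀) by positivity) hδ1
  have hsmall : 4 * A ^ 2 * (C₀ * δ ^ (n : ℤ)) ≤ r := by
    rw [zpow_natCast, ← mul_assoc]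
    exact ((lt_div_iff₀' (by positivity)).mp hn).le
  obtain ⟨Q, hQ, hxQ⟩ := Set.mem_sUnion.mp ((hcover n).symm ▸ Set.mem_univ x)
  obtain ⟨z, hQz⟩ := hball n Q hQ
  exact ⟨n, Q, hQ, hxQ, hd.setEDiam_le_setEDist_of_subset_ball hxQ hQz hΩ hsmall⟩

theorem exists_forall_le_of_setEDiam_le_setEDist (hd : IsQuasimetric d A) {a : ℝ}
    (ha : 0 < a) (hδ0 : 0 < δ) (hδ1 : δ < 1)
    (hlower : ∀ k, ∀ Q ∈ 𝒟 k, ENNReal.ofReal (a * δ ^ k) ≤ setEDiam d Q) (hw : w ∈ T) :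
    ∃ b : ℤ, ∀ k, ∀ Q ∈ 𝒟 k, x ∈ Q → setEDiam d Q ≤ setEDist d Q T → b ≤ k := by
  obtain ⟨b, hb⟩ := exists_forall_le_of_mul_zpow_le (d x w) ha hδ0 hδ1
  refine ⟨b, fun k Q hQ hxQ hgood => hb k ?_⟩
  rw [← ENNReal.ofReal_le_ofReal_iff (hd.nonneg x w)]
  exact (hlower k Q hQ).trans (hgood.trans (setEDist_le hxQ hw))

end IsQuasimetric

def maximalCubes (𝒟 : ℤ → Set (Set X)) (p : Set X → Prop) : Set (Set X) :=
  {Q | ∃ k, Q ∈ 𝒟 k ∧ p Q ∧ ∀ j < k, ∀ Q' ∈ 𝒟 j, Q ⊆ Q' → ¬ p Q'}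

section MaximalCubes

variable {𝒟 : ℤ → Set (Set X)} {p : Set X → Prop}

theorem pairwise_disjoint_maximalCubes (hdisj : ∀ k, (𝒟 k).Pairwise Disjoint)
    (hnested : ∀ k l : ℤ, k ≤ l → ∀ Q ∈ 𝒟 l, ∀ Q' ∈ 𝒟 k, Disjoint Q Q' ∨ Q ⊆ Q') :
    (maximalCubes 𝒟 p).Pairwise Disjoint := by
  rintro Q ⟨k, hk, hpQ, hmax⟩ Q' ⟨k', hk', hpQ', hmax'⟩ hne
  wlog hle : k ≤ k' generalizing Q Q' k k'
  · exact (this k' hk' hpQ' hmax' k hk hpQ hmax hne.symm (le_of_not_ge hle)).symm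
  rcases hnested k k' hle Q' hk' Q hk with h | hsub
  · exact h.symm
  rcases hle.lt_or_eq with hlt | rfl
  · exact absurd hpQ (hmax' k hlt Q hk hsub)
  · exact hdisj k hk hk' hne

theorem exists_mem_maximalCubes {x : X}
    (hbdd : ∃ b : ℤ, ∀ k, ∀ Q ∈ 𝒟 k, x ∈ Q → p Q → b ≤ k)
    (hex : ∃ k, ∃ Q ∈ 𝒟 k, x ∈ Q ∧ p Q) : ∃ Q ∈ maximalCubes 𝒟 p, x ∈ Q := by
  obtain ⟨b, hb⟩ := hbdd
  obtain ⟨k, ⟨Q, hQ, hxQ, hpQ⟩, hleast⟩ := Int.exists_least_of_bdd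
    (P := fun k => ∃ Q ∈ 𝒟 k, x ∈ Q ∧ p Q)
    ⟨b, fun k ⟨Q, hQ, hxQ, hpQ⟩ => hb k Q hQ hxQ hpQ⟩ hex
  refine ⟨Q, ⟨k, hQ, hpQ, fun j hj Q' hQ' hsub hpQ' => ?_⟩, hxQ⟩
  exact (hleast j ⟨Q', hQ', hsub hxQ, hpQ'⟩).not_gt hj

end MaximalCubes

end Whitney

theorem stmt_13_general {X : Type*}
    (d : X → X → ℝ) (A : ℝ) (hA : 1 ≤ A)
    (hd_symm : ∀ x y, d x y = d y x) (hd_self : ∀ x, d x x = 0)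
    (hd_nonneg : ∀ x y, 0 ≤ d x y)
    (hd_tri : ∀ x y z, d x y ≤ A * (d x z + d z y))
    -- lower bound for diameters of balls
    (γ : ℝ) (hγ : 0 < γ)
    (hdiam : ∀ x r, 0 < r →
      ENNReal.ofReal (γ * r) ≤
        ⨆ y ∈ {z | d x z < r}, ⨆ z' ∈ {z | d x z < r}, ENNReal.ofReal (d y z'))
    -- dyadic system with parameters `c₀, C₀, δ`
    (c₀ C₀ δ : ℝ) (hc₀ : 0 < c₀) (hC₀ : c₀ ≤ C₀) (hδ0 : 0 < δ) (hδ1 : δ < 1)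
    (𝒟 : ℤ → Set (Set X))
    (hcover : ∀ k, ⋃₀ 𝒟 k = Set.univ)
    (hdisj : ∀ k, (𝒟 k).Pairwise Disjoint)
    (hnested : ∀ k l : ℤ, k ≤ l → ∀ Q ∈ 𝒟 l, ∀ Q' ∈ 𝒟 k, Disjoint Q Q' ∨ Q ⊆ Q')
    (hcenter : ∀ k, ∀ Q ∈ 𝒟 k, ∃ z,
      {y | d z y < c₀ * δ ^ k} ⊆ Q ∧ Q ⊆ {y | d z y < C₀ * δ ^ k})
    (hparent : ∀ k : ℤ, ∀ Q ∈ 𝒟 k, ∃ Q' ∈ 𝒟 (k - 1), Q ⊆ Q')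
    -- the open set
    (Ω : Set X) (hΩopen : ∀ x ∈ Ω, ∃ r, 0 < r ∧ {y | d x y < r} ⊆ Ω)
    (hΩne : Ω ≠ Set.univ) :
    ∃ 𝔓 : Set (Set X), (∀ P ∈ 𝔓, ∃ k, P ∈ 𝒟 k) ∧ 𝔓.Pairwise Disjoint ∧
      ⋃₀ 𝔓 = Ω ∧
      ∀ P ∈ 𝔓,
        (⨆ y ∈ P, ⨆ z ∈ P, ENNReal.ofReal (d y z)) ≤
            (⨅ y ∈ P, ⨅ z ∈ Ωᶜ, ENNReal.ofReal (d y z)) ∧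
          (⨅ y ∈ P, ⨅ z ∈ Ωᶜ, ENNReal.ofReal (d y z)) ≤
            ENNReal.ofReal (4 * A ^ 2 * C₀ / (γ * c₀ * δ)) *
              ⨆ y ∈ P, ⨆ z ∈ P, ENNReal.ofReal (d y z) := by
  have hd : IsQuasimetric d A := ⟨hA, hd_symm, hd_self, hd_nonneg, hd_tri⟩
  have hC₀pos : 0 < C₀ := hc₀.trans_le hC₀
  have diam_lower : ∀ k, ∀ Q ∈ 𝒟 k, ENNReal.ofReal (γ * c₀ * δ ^ k) ≤ setEDiam d Q := by
    intro k Q hQ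
    obtain ⟨z, hz, -⟩ := hcenter k Q hQ
    rw [mul_assoc]
    exact ofReal_mul_le_setEDiam hdiam (by positivity) hz
  refine ⟨maximalCubes 𝒟 (fun Q => setEDiam d Q ≤ setEDist d Q Ωᶜ),
    fun P ⟨k, hP, _⟩ => ⟨k, hP⟩, pairwise_disjoint_maximalCubes hdisj hnested, ?_, ?_⟩
  · refine subset_antisymm (Set.sUnion_subset fun P ⟨k, hP, hgood, _⟩ =>
      hd.subset_of_setEDiam_le_setEDist ((diam_lower k P hP).trans_lt' (by positivity)) hgood) ?_
    intro x hx
    obtain ⟨w, hw⟩ := Set.nonempty_compl.mpr hΩne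
    obtain ⟨r, hr, hball⟩ := hΩopen x hx
    obtain ⟨P, hP, hxP⟩ := exists_mem_maximalCubes
      (hd.exists_forall_le_of_setEDiam_le_setEDist (by positivity) hδ0 hδ1 diam_lower hw)
      (hd.exists_cube_setEDiam_le_setEDist hC₀pos hδ1 hcover
        (fun k Q hQ => (hcenter k Q hQ).imp fun _ h => h.2) hr hball)
    exact ⟨P, hP, hxP⟩
  · rintro P ⟨k, hP, hgood, hmax⟩
    refine ⟨hgood, ?_⟩
    obtain ⟨P', hP', hPP'⟩ := hparent k P hP
    obtain ⟨z, hzball, -⟩ := hcenter k P hP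
    obtain ⟨z', -, hP'ball⟩ := hcenter (k - 1) P' hP'
    have hzP : z ∈ P := hzball (show d z z < _ by rw [hd_self]; positivity)
    calc setEDist d P Ωᶜ
        ≤ ENNReal.ofReal (4 * A ^ 2 * (C₀ * δ ^ (k - 1))) :=
          hd.setEDist_le_of_not_setEDiam_le hzP hPP' hP'ball (hmax _ (by omega) P' hP' hPP')
      _ = ENNReal.ofReal (4 * A ^ 2 * C₀ / (γ * c₀ * δ)) *
            ENNReal.ofReal (γ * c₀ * δ ^ k) := by
          rw [← ENNReal.ofReal_mul (by positivity), zpow_sub_one₀ hδ0.ne']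
          congr 1
          field_simp
      _ ≤ _ := mul_le_mul_right (diam_lower k P hP) _

/-- Whitney decomposition with dyadic cubes on a doubling quasimetric measure space in which
`diam B(x;r) ≥ γr`: every open `Ω ⊊ X` is the union of a pairwise disjoint family of dyadic
cubes `P` with `diam P ≤ d(P, Ωᶜ) ≤ (4A²C₀/(γc₀δ)) diam P`. -/
theorem stmt_13 {X : Type*} [MeasurableSpace X]
    (d : X → X → ℝ) (A : ℝ) (hA : 1 ≤ A)
    (hd_symm : ∀ x y, d x y = d y x) (hd_self : ∀ x, d x x = 0)
    (hd_nonneg : ∀ x y, 0 ≤ d x y)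
    (hd_tri : ∀ x y z, d x y ≤ A * (d x z + d z y))
    (μ : Measure X) (C : ℝ) (hC : 1 ≤ C)
    (hball : ∀ x r, 0 < r → 0 < μ {y | d x y < r} ∧ μ {y | d x y < r} < ⊤)
    (hdbl : ∀ x r, 0 < r → μ {y | d x y < 2 * r} ≤ ENNReal.ofReal C * μ {y | d x y < r})
    -- lower bound for diameters of balls
    (γ : ℝ) (hγ : 0 < γ)
    (hdiam : ∀ x r, 0 < r →
      ENNReal.ofReal (γ * r) ≤
        ⨆ y ∈ {z | d x z < r}, ⨆ z' ∈ {z | d x z < r}, ENNReal.ofReal (d y z'))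
    -- dyadic system with parameters `c₀, C₀, δ`
    (c₀ C₀ δ : ℝ) (hc₀ : 0 < c₀) (hC₀ : c₀ ≤ C₀) (hδ0 : 0 < δ) (hδ1 : δ < 1)
    (𝒟 : ℤ → Set (Set X))
    (hmeas : ∀ k, ∀ Q ∈ 𝒟 k, MeasurableSet Q)
    (hcover : ∀ k, ⋃₀ 𝒟 k = Set.univ)
    (hdisj : ∀ k, (𝒟 k).Pairwise Disjoint)
    (hnested : ∀ k l : ℤ, k ≤ l → ∀ Q ∈ 𝒟 l, ∀ Q' ∈ 𝒟 k, Disjoint Q Q' ∨ Q ⊆ Q')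
    (hcenter : ∀ k, ∀ Q ∈ 𝒟 k, ∃ z,
      {y | d z y < c₀ * δ ^ k} ⊆ Q ∧ Q ⊆ {y | d z y < C₀ * δ ^ k})
    (hparent : ∀ k : ℤ, ∀ Q ∈ 𝒟 k, ∃ Q' ∈ 𝒟 (k - 1), Q ⊆ Q')
    -- the open set
    (Ω : Set X) (hΩopen : ∀ x ∈ Ω, ∃ r, 0 < r ∧ {y | d x y < r} ⊆ Ω)
    (hΩne : Ω ≠ Set.univ) :
    ∃ 𝔓 : Set (Set X), (∀ P ∈ 𝔓, ∃ k, P ∈ 𝒟 k) ∧ 𝔓.Pairwise Disjoint ∧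
      ⋃₀ 𝔓 = Ω ∧
      ∀ P ∈ 𝔓,
        (⨆ y ∈ P, ⨆ z ∈ P, ENNReal.ofReal (d y z)) ≤
            (⨅ y ∈ P, ⨅ z ∈ Ωᶜ, ENNReal.ofReal (d y z)) ∧
          (⨅ y ∈ P, ⨅ z ∈ Ωᶜ, ENNReal.ofReal (d y z)) ≤
            ENNReal.ofReal (4 * A ^ 2 * C₀ / (γ * c₀ * δ)) *
              ⨆ y ∈ P, ⨆ z ∈ P, ENNReal.ofReal (d y z) :=
  stmt_13_general d A hA hd_symm hd_self hd_nonneg hd_tri γ hγ hdiam c₀ C₀ δ hc₀ hC₀ hδ0 hδ1 𝒟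
    hcover hdisj hnested hcenter hparent Ω hΩopen hΩne
end

section
/- Intermediate maximal estimate for sparse forms: let 1 ≤ p₀ < q₀ ≤ ∞, 0 < β ≤ 1, and let 𝒮 be an η-sparse collection of dyadic cubes. Then Σ_{Q∈𝒮} ⟨f⟩_{p₀,Q} ⟨g⟩_{q₀',Q} |Q| ≤ η^{-1} ∫ ℳ_{p₀}((ℳ_{q₀'} g)^{1−β} f) (ℳ_{q₀'} g)^β dμ for all f, g. -/
open MeasureTheory
open scoped ENNReal

/-- The `L^t` average `⟨f⟩_{t,Q}` over `Q` (w.r.t. `μ`), with the `esssup` interpretation for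
`t = ∞`. -/
noncomputable def eAvg {α : Type*} [MeasurableSpace α] (μ : Measure α) (Q : Set α)
    (t : ℝ≥0∞) (f : α → ℝ≥0∞) : ℝ≥0∞ :=
  if t = ∞ then essSup f (μ.restrict Q)
  else ((μ Q)⁻¹ * ∫⁻ x in Q, f x ^ t.toReal ∂μ) ^ (t.toReal)⁻¹

/-- The dyadic maximal operator `ℳ_t f = sup_{Q ∈ 𝒟, x ∈ Q} ⟨f⟩_{t,Q}`. -/
noncomputable def sMax {α : Type*} [MeasurableSpace α] (μ : Measure α)
    (𝒟 : Set (Set α)) (t : ℝ≥0∞) (f : α → ℝ≥0∞) (x : α) : ℝ≥0∞ :=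
  ⨆ Q ∈ 𝒟, ⨆ (_ : x ∈ Q), eAvg μ Q t f

/-- Intermediate maximal estimate for sparse forms: for `1 ≤ p₀ < q₀ ≤ ∞`, `0 < β ≤ 1` and an
`η`-sparse collection `𝒮`,
`Σ_{Q∈𝒮} ⟨f⟩_{p₀,Q}⟨g⟩_{q₀',Q}|Q| ≤ η⁻¹ ∫ ℳ_{p₀}((ℳ_{q₀'}g)^{1−β} f) (ℳ_{q₀'}g)^β dμ`. -/
theorem stmt_15 {α : Type*} [MeasurableSpace α] (μ : Measure α)
    (𝒟 : Set (Set α)) (hcount : 𝒟.Countable)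
    (hmeas : ∀ Q ∈ 𝒟, MeasurableSet Q)
    (hfin : ∀ Q ∈ 𝒟, 0 < μ Q ∧ μ Q < ⊤)
    (hnest : ∀ Q ∈ 𝒟, ∀ Q' ∈ 𝒟, Disjoint Q Q' ∨ Q ⊆ Q' ∨ Q' ⊆ Q)
    (p₀ : ℝ) (q₀ : ℝ≥0∞) (hp₀ : 1 ≤ p₀) (hq₀ : ENNReal.ofReal p₀ < q₀)
    (q₀' : ℝ) (hq₀' : q₀' = if q₀ = ∞ then 1 else q₀.toReal / (q₀.toReal - 1))
    (β : ℝ) (hβ0 : 0 < β) (hβ1 : β ≤ 1)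
    (η : ℝ) (hη0 : 0 < η) (hη1 : η ≤ 1)
    (𝒮 : Set (Set α)) (h𝒮 : 𝒮 ⊆ 𝒟)
    (E : Set α → Set α)
    (hEsub : ∀ Q ∈ 𝒮, E Q ⊆ Q)
    (hEmeas : ∀ Q ∈ 𝒮, MeasurableSet (E Q))
    (hEdisj : 𝒮.PairwiseDisjoint E)
    (hEsparse : ∀ Q ∈ 𝒮, μ Q ≤ ENNReal.ofReal η⁻¹ * μ (E Q))
    (f g : α → ℝ≥0∞) (hfm : Measurable f) (hgm : Measurable g) :
    ∑' Q : 𝒮, eAvg μ Q (ENNReal.ofReal p₀) f * eAvg μ Q (ENNReal.ofReal q₀') g * μ Q ≤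
      ENNReal.ofReal η⁻¹ *
        ∫⁻ x, sMax μ 𝒟 (ENNReal.ofReal p₀)
            (fun y => (sMax μ 𝒟 (ENNReal.ofReal q₀') g y) ^ (1 - β) * f y) x *
          (sMax μ 𝒟 (ENNReal.ofReal q₀') g x) ^ β ∂μ := by
  classical
  have hp0 : (0:ℝ) < p₀ := lt_of_lt_of_le one_pos hp₀
  have hP : (ENNReal.ofReal p₀) ≠ ∞ := ENNReal.ofReal_ne_top
  have hPt : (ENNReal.ofReal p₀).toReal = p₀ := ENNReal.toReal_ofReal hp0.le
  set P := ENNReal.ofReal p₀ with hPdef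
  set Q' := ENNReal.ofReal q₀' with hQ'def
  set Mg := sMax μ 𝒟 Q' g with hMg
  set F : α → ℝ≥0∞ := fun y => Mg y ^ (1 - β) * f y with hF
  set I : α → ℝ≥0∞ := fun x => sMax μ 𝒟 P F x * Mg x ^ β with hI
  -- pointwise lower bound on E Q
  have key : ∀ Q ∈ 𝒮, ∀ x ∈ E Q,
      eAvg μ Q P f * eAvg μ Q Q' g ≤ I x := by
    intro Q hQ x hx
    have hQ𝒟 : Q ∈ 𝒟 := h𝒮 hQ
    have hxQ : x ∈ Q := hEsub Q hQ hx
    set c := eAvg μ Q Q' g with hc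
    set A := eAvg μ Q P f with hA
    -- c ≤ Mg y for y ∈ Q
    have hcM : ∀ y ∈ Q, c ≤ Mg y := by
      intro y hy
      rw [hMg, sMax]
      refine le_trans ?_ (le_iSup _ Q)
      refine le_trans ?_ (le_iSup _ hQ𝒟)
      exact le_iSup (fun _ : y ∈ Q => c) hy
    -- pull out constant from eAvg
    have pull : ∀ a : ℝ≥0∞, eAvg μ Q P (fun y => a * f y) = a * A := by
      intro a
      rw [hA, eAvg, eAvg, if_neg hP, if_neg hP, hPt]
      have h1 : ∀ y : α, (a * f y) ^ p₀ = a ^ p₀ * f y ^ p₀ := fun y =>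
        ENNReal.mul_rpow_of_nonneg _ _ hp0.le
      simp only [h1]
      rw [lintegral_const_mul _ (hfm.pow_const p₀), ← mul_assoc, mul_comm ((μ Q)⁻¹),
        mul_assoc, ENNReal.mul_rpow_of_nonneg _ _ (inv_nonneg.mpr hp0.le),
        ← ENNReal.rpow_mul, mul_inv_cancel₀ hp0.ne', ENNReal.rpow_one]
    -- monotonicity of eAvg on Q
    have emono : ∀ h₁ h₂ : α → ℝ≥0∞, (∀ y ∈ Q, h₁ y ≤ h₂ y) →
        eAvg μ Q P h₁ ≤ eAvg μ Q P h₂ := by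
      intro h₁ h₂ hle
      rw [eAvg, eAvg, if_neg hP, if_neg hP, hPt]
      refine ENNReal.rpow_le_rpow (mul_le_mul_right ?_ _) (inv_nonneg.mpr hp0.le)
      refine setLIntegral_mono' (hmeas Q hQ𝒟) fun y hy => ?_
      exact ENNReal.rpow_le_rpow (hle y hy) hp0.le
    have h1 : c ^ (1 - β) * A ≤ eAvg μ Q P F := by
      rw [← pull (c ^ (1 - β))]
      refine emono _ _ fun y hy => ?_
      exact mul_le_mul_left (ENNReal.rpow_le_rpow (hcM y hy) (by linarith)) _
    have h2 : eAvg μ Q P F ≤ sMax μ 𝒟 P F x := by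
      rw [sMax]
      refine le_trans ?_ (le_iSup _ Q)
      refine le_trans ?_ (le_iSup _ hQ𝒟)
      exact le_iSup (fun _ : x ∈ Q => eAvg μ Q P F) hxQ
    have h3 : c ^ β ≤ Mg x ^ β := ENNReal.rpow_le_rpow (hcM x hxQ) hβ0.le
    calc A * c = A * (c ^ (1 - β) * c ^ β) := by
          rw [← ENNReal.rpow_add_of_nonneg _ _ (by linarith) hβ0.le]
          norm_num
      _ = c ^ (1 - β) * A * c ^ β := by ring
      _ ≤ sMax μ 𝒟 P F x * Mg x ^ β := mul_le_mul' (h1.trans h2) h3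
  -- per cube estimate
  have perQ : ∀ Q : 𝒮, eAvg μ Q P f * eAvg μ Q Q' g * μ Q ≤
      ENNReal.ofReal η⁻¹ * ∫⁻ x in E Q, I x ∂μ := by
    rintro ⟨Q, hQ⟩
    have hlow : eAvg μ Q P f * eAvg μ Q Q' g * μ (E Q) ≤ ∫⁻ x in E Q, I x ∂μ := by
      have := setLIntegral_const (μ := μ) (E Q) (eAvg μ Q P f * eAvg μ Q Q' g)
      rw [← this]
      exact setLIntegral_mono' (hEmeas Q hQ) fun x hx => key Q hQ x hx
    calc eAvg μ Q P f * eAvg μ Q Q' g * μ Q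
        ≤ eAvg μ Q P f * eAvg μ Q Q' g * (ENNReal.ofReal η⁻¹ * μ (E Q)) :=
          mul_le_mul_right (hEsparse Q hQ) _
      _ = ENNReal.ofReal η⁻¹ * (eAvg μ Q P f * eAvg μ Q Q' g * μ (E Q)) := by ring
      _ ≤ ENNReal.ofReal η⁻¹ * ∫⁻ x in E Q, I x ∂μ := mul_le_mul_right hlow _
  haveI : Countable ↥𝒮 := (hcount.mono h𝒮).to_subtype
  calc ∑' Q : 𝒮, eAvg μ Q P f * eAvg μ Q Q' g * μ Q
      ≤ ∑' Q : 𝒮, ENNReal.ofReal η⁻¹ * ∫⁻ x in E Q, I x ∂μ := ENNReal.tsum_le_tsum perQ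
    _ = ENNReal.ofReal η⁻¹ * ∑' Q : 𝒮, ∫⁻ x in E Q, I x ∂μ := ENNReal.tsum_mul_left
    _ = ENNReal.ofReal η⁻¹ * ∫⁻ x in ⋃ Q : 𝒮, E Q, I x ∂μ := by
        rw [lintegral_iUnion (fun Q : 𝒮 => hEmeas Q Q.2)
          (fun a b hab => hEdisj a.2 b.2 (Subtype.coe_injective.ne hab))]
    _ ≤ ENNReal.ofReal η⁻¹ * ∫⁻ x, I x ∂μ :=
        mul_le_mul_right (setLIntegral_le_lintegral _ _) _
end

section
/- Rubio de Francia iteration properties: let 1 ≤ p₀ < p < ∞ and define ℛh = Σ_{k=0}^∞ 2^{-k} ℳ_{p₀}^k h / ‖ℳ_{p₀}‖_{L^p→L^p}^k for nonnegative h ∈ L^p, where ℳ_{p₀}f = (ℳ(f^{p₀}))^{1/p₀} and ℳ is the maximal operator. Then: (A) h ≤ ℛh pointwise; (B) ‖ℛh‖_p ≤ 2‖h‖_p; (C) ℳ((ℛh)^{p₀}) ≤ 2^{p₀} ‖ℳ‖_{L^{p/p₀}→L^{p/p₀}} (ℛh)^{p₀} pointwise, i.e., [(ℛh)^{p₀}]_{A₁}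 ≤ 2^{p₀}‖ℳ‖_{L^{p/p₀}→L^{p/p₀}}. -/
open MeasureTheory
open scoped ENNReal

/-- The dyadic maximal operator `ℳ f = sup_{Q ∈ 𝒟, x ∈ Q} ⟨f⟩_{1,Q}`. -/
noncomputable def dMax {α : Type*} [MeasurableSpace α] (μ : Measure α)
    (𝒟 : Set (Set α)) (f : α → ℝ≥0∞) (x : α) : ℝ≥0∞ :=
  ⨆ Q ∈ 𝒟, ⨆ (_ : x ∈ Q), (μ Q)⁻¹ * ∫⁻ y in Q, f y ∂μ

/-- The `L^r → L^r` operator norm `‖ℳ‖_{L^r→L^r}` of the dyadic maximal operator. -/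
noncomputable def dMaxNorm {α : Type*} [MeasurableSpace α] (μ : Measure α)
    (𝒟 : Set (Set α)) (r : ℝ) : ℝ≥0∞ :=
  ⨆ f : α → ℝ≥0∞,
    (∫⁻ x, dMax μ 𝒟 f x ^ r ∂μ) ^ (1 / r) / (∫⁻ x, f x ^ r ∂μ) ^ (1 / r)

/-- `ℳ_{p₀} f = (ℳ(f^{p₀}))^{1/p₀}`. -/
noncomputable def dMaxP {α : Type*} [MeasurableSpace α] (μ : Measure α)
    (𝒟 : Set (Set α)) (p₀ : ℝ) (f : α → ℝ≥0∞) : α → ℝ≥0∞ :=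
  fun x => (dMax μ 𝒟 (fun y => f y ^ p₀) x) ^ (1 / p₀)

/-- The Rubio de Francia iteration
`ℛh = Σ_{k=0}^∞ 2^{-k} ℳ_{p₀}^k h / ‖ℳ_{p₀}‖_{L^p→L^p}^k`, where
`‖ℳ_{p₀}‖_{L^p→L^p} = ‖ℳ‖_{L^{p/p₀}→L^{p/p₀}}^{1/p₀}`. -/
noncomputable def rdf {α : Type*} [MeasurableSpace α] (μ : Measure α)
    (𝒟 : Set (Set α)) (p₀ p : ℝ) (h : α → ℝ≥0∞) : α → ℝ≥0∞ :=
  fun x => ∑' k : ℕ,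
    ((dMaxP μ 𝒟 p₀)^[k] h) x / ((2 : ℝ≥0∞) ^ k * (dMaxNorm μ 𝒟 (p / p₀) ^ (1 / p₀)) ^ k)

/-!
`ℛh` is the geometric series `∑ (2M)⁻ᵏ ℳ_{p₀}^k h` with `M = ‖ℳ_{p₀}‖_{L^p→L^p}`. Its `k = 0`
term is `h`, which gives (A). Since `‖ℳ_{p₀}^k h‖_p ≤ Mᵏ ‖h‖_p`, Minkowski's inequality bounds
`‖ℛh‖_p` by `∑ 2⁻ᵏ ‖h‖_p = 2 ‖h‖_p`, which is (B). For (C), `ℳ_{p₀} f (x)` is the supremum,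
over the sets `Q ∈ 𝒟` containing `x`, of the `L^{p₀}` norm of `f` for the normalised measure
on `Q`, so `ℳ_{p₀}` is homogeneous and, by Minkowski again, countably subadditive. Applying it
to the series therefore shifts the index by one: `ℳ_{p₀}(ℛh) ≤ 2M ℛh`. Raising this to the
power `p₀` gives (C).
-/

open Function

lemma ENNReal.iSup_rpow {ι : Sort*} (f : ι → ℝ≥0∞) {y : ℝ} (hy : 0 < y) :
    (⨆ i, f i) ^ y = ⨆ i, f i ^ y :=
  (ENNReal.orderIsoRpow y hy).map_iSup f

section LpNorm

variable {α : Type*} [MeasurableSpace α] {μ : Measure α} {q : ℝ}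

lemma eLpNorm'_eq_lintegral_rpow (f : α → ℝ≥0∞) :
    eLpNorm' f q μ = (∫⁻ x, f x ^ q ∂μ) ^ (1 / q) := rfl

lemma eLpNorm'_const_mul_ennreal (hq : 0 < q) {c : ℝ≥0∞} (hc : c ≠ ⊤) (f : α → ℝ≥0∞) :
    eLpNorm' (fun x => c * f x) q μ = c * eLpNorm' f q μ := by
  simp only [eLpNorm'_eq_lintegral_rpow, ENNReal.mul_rpow_of_nonneg _ _ hq.le]
  rw [lintegral_const_mul' _ _ (ENNReal.rpow_ne_top_of_nonneg hq.le hc),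
    ENNReal.mul_rpow_of_nonneg _ _ (one_div_pos.mpr hq).le, ← ENNReal.rpow_mul,
    mul_one_div_cancel hq.ne', ENNReal.rpow_one]

lemma eLpNorm'_tsum_le (hq : 1 ≤ q) {f : ℕ → α → ℝ≥0∞} (hf : ∀ k, AEMeasurable (f k) μ) :
    eLpNorm' (fun x => ∑' k, f k x) q μ ≤ ∑' k, eLpNorm' (f k) q μ := by
  have hq0 : 0 < q := zero_lt_one.trans_le hq
  have hmono : ∀ x, Monotone fun n => (∑ k ∈ Finset.range n, f k x) ^ q := fun x m n hmn =>
    ENNReal.rpow_le_rpow (Finset.sum_le_sum_of_subset (Finset.range_subset_range.2 hmn)) hq0.le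
  have hpartial : ∀ n, AEMeasurable (fun x => (∑ k ∈ Finset.range n, f k x) ^ q) μ := fun n =>
    (Finset.aemeasurable_fun_sum _ fun k _ => hf k).pow_const q
  have hsup : eLpNorm' (fun x => ∑' k, f k x) q μ
      = ⨆ n, eLpNorm' (∑ k ∈ Finset.range n, f k) q μ := by
    simp_rw [eLpNorm'_eq_lintegral_rpow, ENNReal.tsum_eq_iSup_nat, ENNReal.iSup_rpow _ hq0,
      lintegral_iSup' hpartial (ae_of_all _ hmono), ENNReal.iSup_rpow _ (one_div_pos.2 hq0),
      Finset.sum_apply]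
  rw [hsup]
  exact iSup_le fun n => (eLpNorm'_sum_le (fun k _ => (hf k).aestronglyMeasurable) hq).trans
    (ENNReal.sum_le_tsum _)

end LpNorm

section MaximalOperator

variable {α : Type*} [MeasurableSpace α] (μ : Measure α) (𝒟 : Set (Set α)) {p₀ : ℝ}

lemma measurable_dMax (hcount : 𝒟.Countable) (hmeas : ∀ Q ∈ 𝒟, MeasurableSet Q)
    (f : α → ℝ≥0∞) : Measurable (dMax μ 𝒟 f) := by
  refine Measurable.biSup 𝒟 hcount fun Q hQ => ?_
  have hind : (fun x => ⨆ (_ : x ∈ Q), (μ Q)⁻¹ * ∫⁻ y in Q, f y ∂μ)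
      = Q.indicator fun _ => (μ Q)⁻¹ * ∫⁻ y in Q, f y ∂μ := by
    funext x
    by_cases hx : x ∈ Q <;> simp [hx]
  rw [hind]
  exact measurable_const.indicator (hmeas Q hQ)

lemma measurable_dMaxP (hcount : 𝒟.Countable) (hmeas : ∀ Q ∈ 𝒟, MeasurableSet Q)
    (p₀ : ℝ) (f : α → ℝ≥0∞) : Measurable (dMaxP μ 𝒟 p₀ f) :=
  (measurable_dMax μ 𝒟 hcount hmeas _).pow_const _

lemma dMaxP_eq_iSup_eLpNorm' (hp₀ : 0 < p₀) (f : α → ℝ≥0∞) (x : α) :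
    dMaxP μ 𝒟 p₀ f x = ⨆ Q ∈ 𝒟, ⨆ (_ : x ∈ Q), eLpNorm' f p₀ ((μ Q)⁻¹ • μ.restrict Q) := by
  simp_rw [dMaxP, dMax, ENNReal.iSup_rpow _ (one_div_pos.2 hp₀), eLpNorm'_eq_lintegral_rpow,
    lintegral_smul_measure, smul_eq_mul]

lemma dMaxP_const_mul (hp₀ : 0 < p₀) {c : ℝ≥0∞} (hc : c ≠ ⊤) (f : α → ℝ≥0∞) (x : α) :
    dMaxP μ 𝒟 p₀ (fun y => c * f y) x = c * dMaxP μ 𝒟 p₀ f x := by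
  simp_rw [dMaxP_eq_iSup_eLpNorm' μ 𝒟 hp₀, eLpNorm'_const_mul_ennreal hp₀ hc, ENNReal.mul_iSup]

lemma dMaxP_tsum_le (hp₀ : 1 ≤ p₀) {f : ℕ → α → ℝ≥0∞} (hf : ∀ k, Measurable (f k)) (x : α) :
    dMaxP μ 𝒟 p₀ (fun y => ∑' k, f k y) x ≤ ∑' k, dMaxP μ 𝒟 p₀ (f k) x := by
  have hp₀0 : 0 < p₀ := zero_lt_one.trans_le hp₀
  simp_rw [dMaxP_eq_iSup_eLpNorm' μ 𝒟 hp₀0]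
  refine iSup₂_le fun Q hQ => iSup_le fun hx =>
    (eLpNorm'_tsum_le hp₀ fun k => (hf k).aemeasurable).trans
      (ENNReal.tsum_le_tsum fun k => ?_)
  exact le_iSup₂_of_le (f := fun Q _ => ⨆ (_ : x ∈ Q), eLpNorm' (f k) p₀ _) Q hQ
    (le_iSup_of_le hx le_rfl)

lemma eLpNorm'_dMax_le {r : ℝ} (h0 : dMaxNorm μ 𝒟 r ≠ 0) (htop : dMaxNorm μ 𝒟 r ≠ ⊤)
    (f : α → ℝ≥0∞) : eLpNorm' (dMax μ 𝒟 f) r μ ≤ dMaxNorm μ 𝒟 r * eLpNorm' f r μ :=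
  (ENNReal.div_le_iff_le_mul (Or.inr htop) (Or.inr h0)).mp <|
    le_iSup (fun g : α → ℝ≥0∞ => eLpNorm' (dMax μ 𝒟 g) r μ / eLpNorm' g r μ) f

lemma eLpNorm'_dMaxP_le {p : ℝ} (hp₀ : 0 < p₀) (hp : 0 < p)
    (h0 : dMaxNorm μ 𝒟 (p / p₀) ≠ 0) (htop : dMaxNorm μ 𝒟 (p / p₀) ≠ ⊤) (f : α → ℝ≥0∞) :
    eLpNorm' (dMaxP μ 𝒟 p₀ f) p μ ≤ dMaxNorm μ 𝒟 (p / p₀) ^ (1 / p₀) * eLpNorm' f p μ := by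
  have hexp : 1 / p = 1 / (p / p₀) * (1 / p₀) := by field_simp
  have hpow : ∀ a : ℝ≥0∞, (a ^ (1 / p₀)) ^ p = a ^ (p / p₀) := fun a => by
    rw [← ENNReal.rpow_mul]; ring_nf
  have hpow' : ∀ a : ℝ≥0∞, (a ^ p₀) ^ (p / p₀) = a ^ p := fun a => by
    rw [← ENNReal.rpow_mul]; field_simp
  calc eLpNorm' (dMaxP μ 𝒟 p₀ f) p μ
      = eLpNorm' (dMax μ 𝒟 fun y => f y ^ p₀) (p / p₀) μ ^ (1 / p₀) := by
        simp_rw [eLpNorm'_eq_lintegral_rpow, dMaxP, hpow, hexp, ENNReal.rpow_mul]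
    _ ≤ (dMaxNorm μ 𝒟 (p / p₀) * eLpNorm' (fun y => f y ^ p₀) (p / p₀) μ) ^ (1 / p₀) := by
        gcongr
        exact eLpNorm'_dMax_le μ 𝒟 h0 htop _
    _ = dMaxNorm μ 𝒟 (p / p₀) ^ (1 / p₀) * eLpNorm' f p μ := by
        simp_rw [ENNReal.mul_rpow_of_nonneg _ _ (one_div_pos.2 hp₀).le,
          eLpNorm'_eq_lintegral_rpow, hpow', hexp, ENNReal.rpow_mul]

lemma dMax_rpow_eq_dMaxP_rpow (hp₀ : p₀ ≠ 0) (f : α → ℝ≥0∞) (x : α) :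
    dMax μ 𝒟 (fun y => f y ^ p₀) x = dMaxP μ 𝒟 p₀ f x ^ p₀ := by
  rw [dMaxP, one_div, ENNReal.rpow_inv_rpow hp₀]

end MaximalOperator

section RubioDeFrancia

variable {α : Type*} (T : (α → ℝ≥0∞) → α → ℝ≥0∞) (D : ℝ≥0∞) (h : α → ℝ≥0∞)

noncomputable def rubioDeFranciaSeries : α → ℝ≥0∞ :=
  fun x => ∑' k, (T^[k] h) x / D ^ k

lemma le_rubioDeFranciaSeries (x : α) : h x ≤ rubioDeFranciaSeries T D h x := by
  simpa [rubioDeFranciaSeries] using ENNReal.le_tsum (f := fun k => (T^[k] h) x / D ^ k) 0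

variable [MeasurableSpace α] {T h}

lemma eLpNorm'_rubioDeFranciaSeries_le {μ : Measure α} {p : ℝ} (hp : 1 ≤ p) {M : ℝ≥0∞}
    (hM0 : M ≠ 0) (hMtop : M ≠ ⊤) (hT_meas : ∀ f, Measurable f → Measurable (T f))
    (hT_bdd : ∀ f, eLpNorm' (T f) p μ ≤ M * eLpNorm' f p μ) (hh : Measurable h) :
    eLpNorm' (rubioDeFranciaSeries T (2 * M) h) p μ ≤ 2 * eLpNorm' h p μ := by
  have hiter_meas : ∀ k, Measurable (T^[k] h) := Iterate.rec _ hh hT_meas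
  have hiter_bdd : ∀ k, eLpNorm' (T^[k] h) p μ ≤ M ^ k * eLpNorm' h p μ := by
    intro k
    induction k with
    | zero => simp
    | succ k ih =>
      rw [iterate_succ_apply', pow_succ', mul_assoc]
      exact (hT_bdd _).trans (by gcongr)
  have hratio : ∀ k : ℕ, ((2 * M) ^ k)⁻¹ * M ^ k = 2⁻¹ ^ k := fun k => by
    rw [mul_pow, ENNReal.mul_inv (by simp) (by simp), mul_assoc,
      ENNReal.inv_mul_cancel (pow_ne_zero _ hM0) (ENNReal.pow_ne_top hMtop), mul_one,
      ENNReal.inv_pow]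
  calc eLpNorm' (rubioDeFranciaSeries T (2 * M) h) p μ
      ≤ ∑' k, eLpNorm' (fun x => ((2 * M) ^ k)⁻¹ * (T^[k] h) x) p μ := by
        unfold rubioDeFranciaSeries
        simp_rw [ENNReal.div_eq_inv_mul]
        exact eLpNorm'_tsum_le hp fun k => ((hiter_meas k).const_mul _).aemeasurable
    _ ≤ ∑' k, 2⁻¹ ^ k * eLpNorm' h p μ := by
        refine ENNReal.tsum_le_tsum fun k => ?_
        rw [eLpNorm'_const_mul_ennreal (zero_lt_one.trans_le hp)
          (ENNReal.inv_ne_top.2 (pow_ne_zero _ (mul_ne_zero two_ne_zero hM0))), ← hratio k,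
          mul_assoc]
        gcongr
        exact hiter_bdd k
    _ = 2 * eLpNorm' h p μ := by
        rw [ENNReal.tsum_mul_right, ENNReal.tsum_geometric, ENNReal.one_sub_inv_two, inv_inv]

lemma apply_rubioDeFranciaSeries_le (hD0 : D ≠ 0) (hDtop : D ≠ ⊤)
    (hT_meas : ∀ f, Measurable f → Measurable (T f)) (hh : Measurable h)
    (hT_tsum : ∀ f : ℕ → α → ℝ≥0∞, (∀ k, Measurable (f k)) →
      ∀ x, T (fun y => ∑' k, f k y) x ≤ ∑' k, T (f k) x)
    (hT_mul : ∀ c ≠ ⊤, ∀ f x, T (fun y => c * f y) x ≤ c * T f x) (x : α) :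
    T (rubioDeFranciaSeries T D h) x ≤ D * rubioDeFranciaSeries T D h x := by
  have hiter_meas : ∀ k, Measurable (T^[k] h) := Iterate.rec _ hh hT_meas
  have hDinv : D⁻¹ ≠ ⊤ := ENNReal.inv_ne_top.2 hD0
  calc T (rubioDeFranciaSeries T D h) x
      ≤ ∑' k, T (fun y => D⁻¹ ^ k * (T^[k] h) y) x := by
        unfold rubioDeFranciaSeries
        simp_rw [ENNReal.div_eq_inv_mul, ENNReal.inv_pow]
        exact hT_tsum _ (fun k => (hiter_meas k).const_mul _) x
    _ ≤ ∑' k, D⁻¹ ^ k * (T^[k + 1] h) x :=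
        ENNReal.tsum_le_tsum fun k =>
          (hT_mul _ (ENNReal.pow_ne_top hDinv) _ x).trans_eq (by rw [iterate_succ_apply'])
    _ = D * ∑' k, (T^[k + 1] h) x / D ^ (k + 1) := by
        rw [← ENNReal.tsum_mul_left]
        refine tsum_congr fun k => ?_
        rw [ENNReal.div_eq_inv_mul, pow_succ', ENNReal.mul_inv (Or.inl hD0) (Or.inl hDtop),
          ← mul_assoc, ← mul_assoc, ENNReal.mul_inv_cancel hD0 hDtop, one_mul, ENNReal.inv_pow]
    _ ≤ D * rubioDeFranciaSeries T D h x := by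
        gcongr
        exact ENNReal.tsum_comp_le_tsum_of_injective (add_left_injective 1)
          fun k => (T^[k] h) x / D ^ k

end RubioDeFrancia

theorem stmt_19_general {α : Type*} [MeasurableSpace α] (μ : Measure α)
    (𝒟 : Set (Set α)) (hcount : 𝒟.Countable)
    (hmeas : ∀ Q ∈ 𝒟, MeasurableSet Q)
    (p₀ p : ℝ) (hp₀ : 1 ≤ p₀) (hp : p₀ < p)
    -- the maximal operator is bounded on `L^{p/p₀}`
    (hMbdd : 0 < dMaxNorm μ 𝒟 (p / p₀) ∧ dMaxNorm μ 𝒟 (p / p₀) < ⊤)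
    (h : α → ℝ≥0∞) (hmeas_h : Measurable h) :
    (∀ x, h x ≤ rdf μ 𝒟 p₀ p h x) ∧
      (∫⁻ x, rdf μ 𝒟 p₀ p h x ^ p ∂μ) ^ (1 / p) ≤ 2 * (∫⁻ x, h x ^ p ∂μ) ^ (1 / p) ∧
      ∀ x, dMax μ 𝒟 (fun y => rdf μ 𝒟 p₀ p h y ^ p₀) x ≤
        (2 : ℝ≥0∞) ^ p₀ * dMaxNorm μ 𝒟 (p / p₀) * rdf μ 𝒟 p₀ p h x ^ p₀ := by
  obtain ⟨hN0, hNtop⟩ := hMbdd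
  have hp₀0 : 0 < p₀ := zero_lt_one.trans_le hp₀
  set N := dMaxNorm μ 𝒟 (p / p₀)
  set M := N ^ (1 / p₀)
  have hM0 : M ≠ 0 := (ENNReal.rpow_pos hN0 hNtop.ne).ne'
  have hMtop : M ≠ ⊤ := ENNReal.rpow_ne_top_of_nonneg (one_div_pos.2 hp₀0).le hNtop.ne
  have hrdf : rdf μ 𝒟 p₀ p h = rubioDeFranciaSeries (dMaxP μ 𝒟 p₀) (2 * M) h := by
    funext x
    simp only [rdf, rubioDeFranciaSeries, mul_pow, N, M]
  have hT_meas : ∀ f, Measurable f → Measurable (dMaxP μ 𝒟 p₀ f) :=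
    fun f _ => measurable_dMaxP μ 𝒟 hcount hmeas p₀ f
  rw [hrdf]
  refine ⟨le_rubioDeFranciaSeries _ _ h, ?_, fun x => ?_⟩
  · exact eLpNorm'_rubioDeFranciaSeries_le (hp₀.trans hp.le) hM0 hMtop hT_meas
      (eLpNorm'_dMaxP_le μ 𝒟 hp₀0 (hp₀0.trans hp) hN0.ne' hNtop.ne) hmeas_h
  · have hshift := apply_rubioDeFranciaSeries_le (2 * M) (mul_ne_zero two_ne_zero hM0)
      (ENNReal.mul_ne_top ENNReal.ofNat_ne_top hMtop) hT_meas hmeas_h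
      (fun f hf => dMaxP_tsum_le μ 𝒟 hp₀ hf)
      (fun c hc f x => (dMaxP_const_mul μ 𝒟 hp₀0 hc f x).le) x
    calc dMax μ 𝒟 (fun y => rubioDeFranciaSeries (dMaxP μ 𝒟 p₀) (2 * M) h y ^ p₀) x
        = dMaxP μ 𝒟 p₀ (rubioDeFranciaSeries (dMaxP μ 𝒟 p₀) (2 * M) h) x ^ p₀ :=
          dMax_rpow_eq_dMaxP_rpow μ 𝒟 hp₀0.ne' _ x
      _ ≤ (2 * M * rubioDeFranciaSeries (dMaxP μ 𝒟 p₀) (2 * M) h x) ^ p₀ :=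
          ENNReal.rpow_le_rpow hshift hp₀0.le
      _ = 2 ^ p₀ * N * rubioDeFranciaSeries (dMaxP μ 𝒟 p₀) (2 * M) h x ^ p₀ := by
          rw [ENNReal.mul_rpow_of_nonneg _ _ hp₀0.le, ENNReal.mul_rpow_of_nonneg _ _ hp₀0.le,
            ← ENNReal.rpow_mul, one_div_mul_cancel hp₀0.ne', ENNReal.rpow_one]

/-- Rubio de Francia iteration properties: for `1 ≤ p₀ < p < ∞` and `0 ≤ h ∈ L^p`,
(A) `h ≤ ℛh`; (B) `‖ℛh‖_p ≤ 2‖h‖_p`;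
(C) `ℳ((ℛh)^{p₀}) ≤ 2^{p₀} ‖ℳ‖_{L^{p/p₀}→L^{p/p₀}} (ℛh)^{p₀}` pointwise, i.e.
`[(ℛh)^{p₀}]_{A₁} ≤ 2^{p₀} ‖ℳ‖_{L^{p/p₀}→L^{p/p₀}}`. -/
theorem stmt_19 {α : Type*} [MeasurableSpace α] (μ : Measure α)
    (𝒟 : Set (Set α)) (hcount : 𝒟.Countable)
    (hmeas : ∀ Q ∈ 𝒟, MeasurableSet Q)
    (hfin : ∀ Q ∈ 𝒟, 0 < μ Q ∧ μ Q < ⊤)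
    (hnest : ∀ Q ∈ 𝒟, ∀ Q' ∈ 𝒟, Disjoint Q Q' ∨ Q ⊆ Q' ∨ Q' ⊆ Q)
    (p₀ p : ℝ) (hp₀ : 1 ≤ p₀) (hp : p₀ < p)
    -- the maximal operator is bounded on `L^{p/p₀}`
    (hMbdd : 0 < dMaxNorm μ 𝒟 (p / p₀) ∧ dMaxNorm μ 𝒟 (p / p₀) < ⊤)
    (h : α → ℝ≥0∞) (hmeas_h : Measurable h) (hLp : ∫⁻ x, h x ^ p ∂μ < ⊤) :
    (∀ x, h x ≤ rdf μ 𝒟 p₀ p h x) ∧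
      (∫⁻ x, rdf μ 𝒟 p₀ p h x ^ p ∂μ) ^ (1 / p) ≤ 2 * (∫⁻ x, h x ^ p ∂μ) ^ (1 / p) ∧
      ∀ x, dMax μ 𝒟 (fun y => rdf μ 𝒟 p₀ p h y ^ p₀) x ≤
        (2 : ℝ≥0∞) ^ p₀ * dMaxNorm μ 𝒟 (p / p₀) * rdf μ 𝒟 p₀ p h x ^ p₀ :=
  stmt_19_general μ 𝒟 hcount hmeas p₀ p hp₀ hp hMbdd h hmeas_h
end
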